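/- arXiv:2601.17273 — 8 statements merged into one kernel-verified Lean document; each statement's English description precedes it below -/
import Mathlib

section
/- For all integers k ≥ 2 and n ≥ k, the number of edges of the k-th order Fibonacci cube satisfies |E(Γ^{(k)}_n)| = ∑_{i=1}^{k} |E(Γ^{(k)}_{n−i})| + ∑_{i=2}^{k} (i−1)·|V(Γ^{(k)}_{n−i})|. -/
/-- `hasKOnes k s` says the binary string `s : Fin n → Bool` contains a block of
`k` consecutive coordinates all equal to `1` (i.e. `true`). -/
def hasKOnes (k : ℕ) {n : ℕ} (s : Fin n → Bool) : Prop :=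
  ∃ i : ℕ, ∃ h : i + k ≤ n, ∀ j : ℕ, ∀ hj : j < k, s ⟨i + j, by omega⟩ = true

/-- The hypercube graph `Q_n`: vertices are the binary strings of length `n`
(functions `Fin n → Bool`), two strings being adjacent exactly when they differ
in exactly one coordinate. -/
def cube (n : ℕ) : SimpleGraph (Fin n → Bool) where
  Adj x y := ∃! i, x i ≠ y i
  symm := by
    constructor
    rintro x y ⟨i, hi, hu⟩
    exact ⟨i, hi.symm, fun j hj => hu j hj.symm⟩
  loopless := by
    constructor
    rintro x ⟨i, hi, -⟩
    exact hi rfl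

/-- The number of edges of the `k`-th order Fibonacci cube `Γ^(k)_n`, the subgraph
of `Q_n` induced by the binary strings with no `k` consecutive 1s. -/
noncomputable def eGamma (k n : ℕ) : ℕ :=
  Nat.card ((cube n).induce {s : Fin n → Bool | ¬ hasKOnes k s}).edgeSet

/-- The number of vertices of the `k`-th order Fibonacci cube `Γ^(k)_n`. -/
noncomputable def vGamma (k n : ℕ) : ℕ :=
  Nat.card {s : Fin n → Bool | ¬ hasKOnes k s}

namespace EG

lemma noK_update {k n : ℕ} {x : Fin n → Bool} (hx : ¬ hasKOnes k x) (j : Fin n) :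
    ¬ hasKOnes k (Function.update x j false) := by
  rintro ⟨i, h, hall⟩
  refine hx ⟨i, h, fun m hm => ?_⟩
  have hm' := hall m hm
  by_cases hj : (⟨i + m, by omega⟩ : Fin n) = j
  · rw [hj, Function.update_self] at hm'; exact absurd hm' (by simp)
  · rwa [Function.update_of_ne hj] at hm'

def Dset (k n : ℕ) : Set ((Fin n → Bool) × Fin n) :=
  {p | ¬ hasKOnes k p.1 ∧ p.1 p.2 = true ∧ ¬ hasKOnes k (Function.update p.1 p.2 false)}

def Sset (k n : ℕ) : Set (Fin n → Bool) := {s | ¬ hasKOnes k s}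

end EG

def toEdge (k n : ℕ) (p : ↥(EG.Dset k n)) :
    ((cube n).induce {s : Fin n → Bool | ¬ hasKOnes k s}).edgeSet :=
  ⟨s(⟨p.1.1, p.2.1⟩, ⟨Function.update p.1.1 p.1.2 false, p.2.2.2⟩), by
    rw [SimpleGraph.mem_edgeSet]
    show ∃! i : Fin n, p.1.1 i ≠ Function.update p.1.1 p.1.2 false i
    refine ⟨p.1.2, ?_, ?_⟩
    · show p.1.1 p.1.2 ≠ Function.update p.1.1 p.1.2 false p.1.2
      rw [Function.update_self, p.2.2.1]; simp
    · intro y hy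
      by_contra hne
      rw [Function.update_of_ne hne] at hy
      exact hy rfl⟩

namespace EG

lemma eGamma_eq (k n : ℕ) : eGamma k n = Nat.card (Dset k n) := by
  refine (Nat.card_eq_of_bijective (toEdge k n) ⟨?_, ?_⟩).symm
  · rintro ⟨⟨x, j⟩, hx, h1, h2⟩ ⟨⟨x', j'⟩, hx', h1', h2'⟩ h
    simp only [toEdge, Subtype.mk.injEq, Sym2.eq_iff] at h
    have hxj : x j = true := h1
    have hx'j : x' j' = true := h1'
    rcases h with ⟨ha, hb⟩ | ⟨ha, hb⟩
    · have hj : j = j' := by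
        by_contra hne
        have hcf := congrFun hb j
        rw [Function.update_self, Function.update_of_ne hne, ← ha, hxj] at hcf
        exact absurd hcf (by simp)
      subst hj
      subst ha
      rfl
    · exfalso
      have hc := congrFun ha j'
      rw [Function.update_self] at hc
      by_cases hjj : j' = j
      · subst hjj
        rw [hxj] at hc
        exact absurd hc (by simp)
      · have hc2 := congrFun hb j'
        rw [Function.update_of_ne hjj] at hc2
        rw [hc, hx'j] at hc2
        exact absurd hc2 (by simp)
  · rintro ⟨e, he⟩
    have key : ∀ e' ∈ ((cube n).induce {s : Fin n → Bool | ¬ hasKOnes k s}).edgeSet,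
        ∃ p : ↥(Dset k n), (toEdge k n p).1 = e' := by
      intro e'
      induction e' using Sym2.ind with
      | _ a b =>
        intro hab
        rw [SimpleGraph.mem_edgeSet] at hab
        obtain ⟨i, hi, hu⟩ : ∃! i : Fin n, a.1 i ≠ b.1 i := hab
        have heq : ∀ m, m ≠ i → a.1 m = b.1 m := by
          intro m hm
          by_contra hne
          exact hm (hu m hne)
        cases ha : a.1 i with
        | true =>
          have hb : b.1 i = false := by
            cases hbv : b.1 i with
            | true => exact absurd (ha.trans hbv.symm) hi
            | false => rfl
          have hbu : b.1 = Function.update a.1 i false := by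
            funext m
            by_cases hm : m = i
            · subst hm; rw [Function.update_self, hb]
            · rw [Function.update_of_ne hm, heq m hm]
          refine ⟨⟨(a.1, i), a.2, ha, hbu ▸ b.2⟩, ?_⟩
          simp only [toEdge]
          exact Sym2.eq_iff.mpr (Or.inl ⟨Subtype.ext rfl, Subtype.ext hbu.symm⟩)
        | false =>
          have hb : b.1 i = true := by
            cases hbv : b.1 i with
            | true => rfl
            | false => exact absurd (ha.trans hbv.symm) hi
          have hbu : a.1 = Function.update b.1 i false := by
            funext m
            by_cases hm : m = i
            · subst hm; rw [Function.update_self, ha]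
            · rw [Function.update_of_ne hm, heq m hm]
          refine ⟨⟨(b.1, i), b.2, hb, hbu ▸ a.2⟩, ?_⟩
          simp only [toEdge]
          exact Sym2.eq_iff.mpr (Or.inr ⟨Subtype.ext rfl, Subtype.ext hbu.symm⟩)
    obtain ⟨p, hp⟩ := key e he
    exact ⟨p, Subtype.ext hp⟩

end EG

namespace EG

lemma fmk {m a b : ℕ} {pa : a < m} {pb : b < m} (h : a = b) : (⟨a, pa⟩ : Fin m) = ⟨b, pb⟩ :=
  Fin.ext h

def emb (i n : ℕ) (s : Fin (n - i) → Bool) : Fin n → Bool := fun j =>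
  if (j : ℕ) + 1 < i then true
  else if (j : ℕ) + 1 = i then false
  else if h : (j : ℕ) - i < n - i then s ⟨(j : ℕ) - i, h⟩ else false

lemma emb_lt {i n : ℕ} (s : Fin (n - i) → Bool) (j : Fin n) (h : (j : ℕ) + 1 < i) :
    emb i n s j = true := by simp [emb, h]

lemma emb_eq {i n : ℕ} (s : Fin (n - i) → Bool) (j : Fin n) (h : (j : ℕ) + 1 = i) :
    emb i n s j = false := by simp [emb, h]

lemma emb_ge {i n : ℕ} (s : Fin (n - i) → Bool) (j : Fin n) (h : i ≤ (j : ℕ))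
    (pf : (j : ℕ) - i < n - i) : emb i n s j = s ⟨(j : ℕ) - i, pf⟩ := by
  rw [emb, if_neg (by omega), if_neg (by omega), dif_pos pf]

lemma emb_lt' {i n : ℕ} (s : Fin (n - i) → Bool) (a : ℕ) (pa : a < n) (h : a + 1 < i) :
    emb i n s ⟨a, pa⟩ = true := emb_lt s ⟨a, pa⟩ h

lemma emb_eq' {i n : ℕ} (s : Fin (n - i) → Bool) (a : ℕ) (pa : a < n) (h : a + 1 = i) :
    emb i n s ⟨a, pa⟩ = false := emb_eq s ⟨a, pa⟩ h

lemma emb_ge' {i n : ℕ} (s : Fin (n - i) → Bool) (a : ℕ) (pa : a < n) (h : i ≤ a)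
    (pf : a - i < n - i) : emb i n s ⟨a, pa⟩ = s ⟨a - i, pf⟩ := emb_ge s ⟨a, pa⟩ h pf

lemma emb_inj {i n : ℕ} (hin : i ≤ n) {s s' : Fin (n - i) → Bool}
    (h : emb i n s = emb i n s') : s = s' := by
  funext j
  have hj := j.isLt
  have hc := congrFun h ⟨(j : ℕ) + i, by omega⟩
  rw [emb_ge' _ _ _ (by omega) (by omega), emb_ge' _ _ _ (by omega) (by omega)] at hc
  have e : (⟨(j:ℕ) + i - i, by omega⟩ : Fin (n - i)) = j := Fin.ext (show (j:ℕ) + i - i = j by omega)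
  rwa [e] at hc

lemma emb_update {i n : ℕ} (hin : i ≤ n) (s : Fin (n - i) → Bool) (j : Fin (n - i))
    (pf : (j : ℕ) + i < n) :
    Function.update (emb i n s) ⟨(j : ℕ) + i, pf⟩ false = emb i n (Function.update s j false) := by
  have hj := j.isLt
  funext m
  by_cases hm : m = (⟨(j : ℕ) + i, pf⟩ : Fin n)
  · subst hm
    rw [Function.update_self, emb_ge' _ _ _ (by omega) (by omega)]
    have e : (⟨(j:ℕ) + i - i, by omega⟩ : Fin (n - i)) = j := Fin.ext (show (j:ℕ) + i - i = j by omega)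
    rw [e, Function.update_self]
  · rw [Function.update_of_ne hm]
    have hmv : (m : ℕ) ≠ (j : ℕ) + i := fun hc => hm (Fin.ext hc)
    rcases lt_trichotomy ((m : ℕ) + 1) i with h | h | h
    · rw [emb_lt _ _ h, emb_lt _ _ h]
    · rw [emb_eq _ _ h, emb_eq _ _ h]
    · have hmi : i ≤ (m : ℕ) := by omega
      have hm2 : (m : ℕ) - i < n - i := by have := m.isLt; omega
      rw [emb_ge _ _ hmi hm2, emb_ge _ _ hmi hm2,
        Function.update_of_ne (fun hc => hmv (by
          have := congrArg Fin.val hc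
          simp only [Fin.val_mk] at this
          omega))]

lemma hasK_emb {k i n : ℕ} (hi1 : 1 ≤ i) (hik : i ≤ k) (hin : i ≤ n) (s : Fin (n - i) → Bool) :
    hasKOnes k (emb i n s) ↔ hasKOnes k s := by
  constructor
  · rintro ⟨a, h, hall⟩
    have hai : i ≤ a := by
      by_contra hc
      push_neg at hc
      have h1 := hall (i - 1 - a) (by omega)
      rw [emb_eq' _ _ _ (by omega)] at h1
      exact absurd h1 (by simp)
    refine ⟨a - i, by omega, fun j hj => ?_⟩
    have h1 := hall j hj
    rw [emb_ge' _ _ _ (by omega) (by omega)] at h1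
    have e : (⟨a + j - i, by omega⟩ : Fin (n - i)) = ⟨a - i + j, by omega⟩ := fmk (by omega)
    rwa [e] at h1
  · rintro ⟨a, h, hall⟩
    refine ⟨a + i, by omega, fun j hj => ?_⟩
    rw [emb_ge' _ _ _ (by omega) (by omega)]
    have e : (⟨a + i + j - i, by omega⟩ : Fin (n - i)) = ⟨a + j, by omega⟩ := fmk (by omega)
    rw [e]
    exact hall j hj

def toN {n : ℕ} (x : Fin n → Bool) : ℕ → Bool := fun j => if h : j < n then x ⟨j, h⟩ else false

lemma toN_ex {n : ℕ} (x : Fin n → Bool) : ∃ j, toN x j = false := ⟨n, by simp [toN]⟩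

def ff {n : ℕ} (x : Fin n → Bool) : ℕ := Nat.find (toN_ex x)

lemma ff_spec {n : ℕ} (x : Fin n → Bool) : toN x (ff x) = false := Nat.find_spec (toN_ex x)

lemma ff_min {n : ℕ} (x : Fin n → Bool) {j : ℕ} (hj : j < ff x) : toN x j = true := by
  have := Nat.find_min (toN_ex x) hj
  simpa using this

lemma ff_lt {k n : ℕ} {x : Fin n → Bool} (hn : k ≤ n) (hx : ¬ hasKOnes k x) : ff x < k := by
  by_contra hc
  push_neg at hc
  refine hx ⟨0, by omega, fun j hj => ?_⟩
  have h1 : toN x j = true := ff_min x (lt_of_lt_of_le hj hc)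
  rw [toN, dif_pos (by omega : j < n)] at h1
  have e : (⟨0 + j, by omega⟩ : Fin n) = ⟨j, by omega⟩ := fmk (by omega)
  rw [e]
  exact h1

lemma ff_emb {i n : ℕ} (hi1 : 1 ≤ i) (hin : i ≤ n) (s : Fin (n - i) → Bool) :
    ff (emb i n s) = i - 1 := by
  rw [ff, Nat.find_eq_iff]
  constructor
  · show toN _ (i - 1) = false
    rw [toN, dif_pos (by omega : i - 1 < n)]
    exact emb_eq' _ _ _ (by omega)
  · intro m hm
    rw [toN, dif_pos (by omega : m < n), emb_lt' _ _ _ (by omega)]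
    simp

def suf (i n : ℕ) (x : Fin n → Bool) : Fin (n - i) → Bool :=
  fun j => x ⟨(j : ℕ) + i, by have := j.isLt; omega⟩

lemma suf_emb {i n : ℕ} (s : Fin (n - i) → Bool) : suf i n (emb i n s) = s := by
  funext j
  have hj := j.isLt
  rw [suf, emb_ge' _ _ _ (by omega) (by omega)]
  exact congrArg s (fmk (by omega))

lemma emb_suf {k n : ℕ} {x : Fin n → Bool} (hn : k ≤ n) (hx : ¬ hasKOnes k x) :
    emb (ff x + 1) n (suf (ff x + 1) n x) = x := by
  have hffk : ff x < k := ff_lt hn hx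
  funext j
  rcases lt_trichotomy ((j : ℕ) + 1) (ff x + 1) with h | h | h
  · rw [emb_lt _ _ h]
    have h1 : toN x (j : ℕ) = true := ff_min x (by omega)
    rw [toN, dif_pos j.isLt, Fin.eta] at h1
    exact h1.symm
  · rw [emb_eq _ _ h]
    have h1 : toN x (ff x) = false := ff_spec x
    rw [toN, dif_pos (by omega : ff x < n)] at h1
    have e : j = (⟨ff x, by omega⟩ : Fin n) := Fin.ext (show (j:ℕ) = ff x by omega)
    rw [e]
    exact h1.symm
  · have hj := j.isLt
    rw [emb_ge _ _ (by omega) (by omega), suf]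
    exact (congrArg x (Fin.ext (show (j:ℕ) = (j:ℕ) - (ff x + 1) + (ff x + 1) by omega))).symm

end EG

namespace EG

abbrev TT (k n : ℕ) : Type :=
  (i : ↥(Finset.Icc 1 k)) × (↥(Dset k (n - (i : ℕ))) ⊕ (Fin ((i : ℕ) - 1) × ↥(Sset k (n - (i : ℕ)))))

def gA (k n i : ℕ) (hi1 : 1 ≤ i) (hik : i ≤ k) (hn : k ≤ n) (q : ↥(Dset k (n - i))) :
    ↥(Dset k n) :=
  ⟨(emb i n q.1.1, ⟨(q.1.2 : ℕ) + i, by have := q.1.2.isLt; omega⟩), by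
    obtain ⟨⟨s, j⟩, hs, h1, h2⟩ := q
    have hin : i ≤ n := le_trans hik hn
    have hj := j.isLt
    refine ⟨fun h => hs ((hasK_emb hi1 hik hin s).mp h), ?_, ?_⟩
    · show emb i n s ⟨(j : ℕ) + i, by omega⟩ = true
      rw [emb_ge' _ _ _ (by omega) (by omega)]
      have e : (⟨(j : ℕ) + i - i, by omega⟩ : Fin (n - i)) = j :=
        Fin.ext (show (j : ℕ) + i - i = (j : ℕ) by omega)
      rw [e]; exact h1
    · show ¬ hasKOnes k (Function.update (emb i n s) ⟨(j : ℕ) + i, by omega⟩ false)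
      rw [emb_update hin s j (by omega)]
      exact fun h => h2 ((hasK_emb hi1 hik hin _).mp h)⟩

def gB (k n i : ℕ) (hi1 : 1 ≤ i) (hik : i ≤ k) (hn : k ≤ n) (t : Fin (i - 1))
    (q : ↥(Sset k (n - i))) : ↥(Dset k n) :=
  ⟨(emb i n q.1, ⟨(t : ℕ), by have := t.isLt; omega⟩), by
    obtain ⟨s, hs⟩ := q
    have hin : i ≤ n := le_trans hik hn
    have ht := t.isLt
    refine ⟨fun h => hs ((hasK_emb hi1 hik hin s).mp h), ?_, ?_⟩
    · exact emb_lt' _ _ _ (by omega)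
    · exact noK_update (fun h => hs ((hasK_emb hi1 hik hin s).mp h)) _⟩

def gmap (k n : ℕ) (hn : k ≤ n) : TT k n → ↥(Dset k n) := fun p =>
  match p with
  | ⟨⟨i, hi⟩, Sum.inl q⟩ =>
      gA k n i (Finset.mem_Icc.mp hi).1 (Finset.mem_Icc.mp hi).2 hn q
  | ⟨⟨i, hi⟩, Sum.inr (t, q)⟩ =>
      gB k n i (Finset.mem_Icc.mp hi).1 (Finset.mem_Icc.mp hi).2 hn t q

lemma gmap_inj (k n : ℕ) (hn : k ≤ n) : Function.Injective (gmap k n hn) := by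
  rintro ⟨⟨i, hi⟩, (⟨⟨s, j⟩, hmem⟩ | ⟨t, ⟨s, hs⟩⟩)⟩
    ⟨⟨i', hi'⟩, (⟨⟨s', j'⟩, hmem'⟩ | ⟨t', ⟨s', hs'⟩⟩)⟩ h <;>
  obtain ⟨hi1, hik⟩ := Finset.mem_Icc.mp hi <;>
  obtain ⟨hi'1, hi'k⟩ := Finset.mem_Icc.mp hi' <;>
  have hx : emb i n s = emb i' n s' := congrArg (fun z => z.1.1) h <;>
  have hii : i = i' := by
    have e1 := ff_emb hi1 (le_trans hik hn) s
    rw [hx, ff_emb hi'1 (le_trans hi'k hn) s'] at e1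
    omega
  all_goals subst hii
  all_goals have hs2 : s = s' := emb_inj (le_trans hik hn) hx
  all_goals subst hs2
  all_goals have hval : _ = _ := congrArg (fun z => ((z : ↥(Dset k n)).1.2 : ℕ)) h
  all_goals simp only [gmap, gA, gB] at hval
  · have hjj : j = j' := Fin.ext (by omega)
    subst hjj
    rfl
  · exfalso
    have ha := j.isLt
    have hb := t'.isLt
    omega
  · exfalso
    have ha := j'.isLt
    have hb := t.isLt
    omega
  · have htt : t = t' := Fin.ext (by omega)
    subst htt
    rfl

end EG

namespace EG

lemma gmap_surj (k n : ℕ) (hk1 : 1 ≤ k) (hn : k ≤ n) : Function.Surjective (gmap k n hn) := by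
  rintro ⟨⟨x, j⟩, hx, h1, h2⟩
  have h1' : x j = true := h1
  have h2' : ¬ hasKOnes k (Function.update x j false) := h2
  have hx' : ¬ hasKOnes k x := hx
  set i := ff x + 1 with hidef
  have hffk : ff x < k := ff_lt hn hx'
  have hi : i ∈ Finset.Icc 1 k := Finset.mem_Icc.mpr ⟨by omega, by omega⟩
  have hxe : emb i n (suf i n x) = x := emb_suf hn hx'
  have hsufK : ¬ hasKOnes k (suf i n x) := fun hh =>
    hx' (hxe ▸ (hasK_emb (by omega) (by omega) (by omega) _).mpr hh)
  have hjne : (j : ℕ) ≠ ff x := by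
    intro hc
    have hsp := ff_spec x
    rw [toN, dif_pos (by omega : ff x < n)] at hsp
    have e : j = (⟨ff x, by omega⟩ : Fin n) := Fin.ext hc
    rw [e, hsp] at h1'
    exact absurd h1' (by simp)
  rcases lt_or_gt_of_ne hjne with hlt | hgt
  · refine ⟨⟨⟨i, hi⟩, Sum.inr (⟨(j : ℕ), by show (j:ℕ) < i - 1; omega⟩, ⟨suf i n x, hsufK⟩)⟩, ?_⟩
    apply Subtype.ext
    show (emb i n (suf i n x), _) = (x, j)
    refine Prod.ext hxe (Fin.ext ?_)
    show (j : ℕ) = (j : ℕ)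
    rfl
  · have hji : i ≤ (j : ℕ) := by omega
    have hjlt := j.isLt
    refine ⟨⟨⟨i, hi⟩, Sum.inl ⟨(suf i n x, ⟨(j : ℕ) - i, by show (j:ℕ) - i < n - i; omega⟩), hsufK, ?_, ?_⟩⟩, ?_⟩
    · show suf i n x ⟨(j : ℕ) - i, by omega⟩ = true
      rw [suf]
      have e : (⟨(j : ℕ) - i + i, by omega⟩ : Fin n) = j :=
        Fin.ext (show (j : ℕ) - i + i = (j : ℕ) by omega)
      rw [e]
      exact h1'
    · show ¬ hasKOnes k (Function.update (suf i n x) ⟨(j : ℕ) - i, by omega⟩ false)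
      intro hh
      apply h2'
      have e : (⟨(j : ℕ) - i + i, by omega⟩ : Fin n) = j :=
        Fin.ext (show (j : ℕ) - i + i = (j : ℕ) by omega)
      rw [← hxe, ← e, emb_update (by omega) (suf i n x) ⟨(j : ℕ) - i, by omega⟩ (by omega)]
      exact (hasK_emb (by omega) (by omega) (by omega) _).mpr hh
    · apply Subtype.ext
      show (emb i n (suf i n x), _) = (x, j)
      refine Prod.ext hxe (Fin.ext ?_)
      show (j : ℕ) - i + i = (j : ℕ)
      omega

end EG

namespace EG

lemma card_Dset (k n : ℕ) (hk1 : 1 ≤ k) (hn : k ≤ n) :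
    Nat.card (Dset k n) =
      ∑ i ∈ Finset.Icc 1 k, (Nat.card (Dset k (n - i)) + (i - 1) * Nat.card (Sset k (n - i))) := by
  classical
  rw [← Nat.card_eq_of_bijective (gmap k n hn) ⟨gmap_inj k n hn, gmap_surj k n hk1 hn⟩]
  rw [Nat.card_eq_fintype_card, Fintype.card_sigma]
  rw [← Finset.sum_coe_sort (Finset.Icc 1 k)
    (fun i => Nat.card (Dset k (n - i)) + (i - 1) * Nat.card (Sset k (n - i)))]
  refine Finset.sum_congr rfl fun i _ => ?_
  rw [Fintype.card_sum, Fintype.card_prod, Fintype.card_fin,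
    ← Nat.card_eq_fintype_card, ← Nat.card_eq_fintype_card]

end EG

/-- Theorem 2.3: for `n ≥ k ≥ 2`,
`|E(Γ^(k)_n)| = ∑_{i=1}^{k} |E(Γ^(k)_{n-i})| + ∑_{i=2}^{k} (i-1)|V(Γ^(k)_{n-i})|`. -/
theorem eGamma_recurrence (k n : ℕ) (hk : 2 ≤ k) (hn : k ≤ n) :
    eGamma k n = (∑ i ∈ Finset.Icc 1 k, eGamma k (n - i)) +
      ∑ i ∈ Finset.Icc 2 k, (i - 1) * vGamma k (n - i) := by
  have hk1 : 1 ≤ k := by omega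
  rw [EG.eGamma_eq, EG.card_Dset k n hk1 hn, Finset.sum_add_distrib]
  congr 1
  · exact Finset.sum_congr rfl fun i _ => (EG.eGamma_eq k (n - i)).symm
  · have hins : Finset.Icc 1 k = insert 1 (Finset.Icc 2 k) := by
      ext m
      simp only [Finset.mem_Icc, Finset.mem_insert]
      omega
    rw [hins, Finset.sum_insert (by simp [Finset.mem_Icc])]
    simp only [Nat.sub_self, zero_mul, zero_add]
    exact Finset.sum_congr rfl fun i _ => rfl
end

section
/- For every integer n ≥ 1, ∑_{i=1}^{n} i·2^{n−i} + ∑_{i=1}^{n−2} i·(n−1−i)·2^{n−2−i} = n·2^{n−1}, where the second sum is empty (equal to 0) when n ≤ 2. -/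
/-!
Write `A n = ∑ i * 2^(n-i)` and `B m = ∑ i * (m+1-i) * 2^(m-i)`. Peeling off the top term gives
`A (n+1) = 2 A n + (n+1)`, hence `A n = 2^(n+1) - n - 2`, and, since `i (m+2-i) = i (m+1-i) + i`,
`B (m+1) = 2 B m + A (m+1)`. With these, `A (m+2) + B m = (m+2) 2^(m+1)` follows by induction on `m`.
-/

open Finset

theorem sum_Icc_mul_pow_sub_succ {R : Type*} [CommSemiring R] (f : ℕ → R) (a : R) (n : ℕ) :
    ∑ i ∈ Icc 1 (n + 1), f i * a ^ (n + 1 - i) = a * ∑ i ∈ Icc 1 n, f i * a ^ (n - i) + f (n + 1) := by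
  rw [sum_Icc_succ_top (by omega), Nat.sub_self, pow_zero, mul_one, mul_sum]
  congr 1
  refine sum_congr rfl fun i hi => ?_
  rw [Nat.sub_add_comm (mem_Icc.mp hi).2, pow_succ]
  ring

theorem sum_Icc_mul_two_pow_sub_add (n : ℕ) :
    ∑ i ∈ Icc 1 n, i * 2 ^ (n - i) + (n + 2) = 2 ^ (n + 1) := by
  induction n with
  | zero => simp
  | succ n ih =>
    rw [sum_Icc_mul_pow_sub_succ, pow_succ]
    omega

theorem sum_Icc_mul_mul_two_pow_sub_succ (m : ℕ) :
    ∑ i ∈ Icc 1 (m + 1), i * (m + 2 - i) * 2 ^ (m + 1 - i) =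
      2 * ∑ i ∈ Icc 1 m, i * (m + 1 - i) * 2 ^ (m - i) + ∑ i ∈ Icc 1 (m + 1), i * 2 ^ (m + 1 - i) := by
  have hsplit : ∀ i ∈ Icc 1 (m + 1),
      i * (m + 2 - i) * 2 ^ (m + 1 - i) = i * (m + 1 - i) * 2 ^ (m + 1 - i) + i * 2 ^ (m + 1 - i) := by
    intro i hi
    have hi : i ≤ m + 1 := (mem_Icc.mp hi).2
    rw [← add_mul, ← mul_add_one]
    congr 2
    omega
  rw [sum_congr rfl hsplit, sum_add_distrib, sum_Icc_mul_pow_sub_succ (fun i => i * (m + 1 - i))]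
  simp

theorem sum_mul_two_pow_add_sum_mul_mul_two_pow (m : ℕ) :
    ∑ i ∈ Icc 1 (m + 2), i * 2 ^ (m + 2 - i) + ∑ i ∈ Icc 1 m, i * (m + 1 - i) * 2 ^ (m - i) =
      (m + 2) * 2 ^ (m + 1) := by
  induction m with
  | zero => simp [sum_Icc_succ_top]
  | succ m ih =>
    have hA := sum_Icc_mul_two_pow_sub_add (m + 1)
    rw [pow_succ] at hA
    rw [sum_Icc_mul_pow_sub_succ, sum_Icc_mul_mul_two_pow_sub_succ, pow_succ 2 (m + 1)]
    linarith

theorem sum_mul_two_pow'_general (n : ℕ) :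
    (∑ i ∈ Finset.Icc 1 n, i * 2 ^ (n - i)) +
      (∑ i ∈ Finset.Icc 1 (n - 2), i * (n - 1 - i) * 2 ^ (n - 2 - i)) =
    n * 2 ^ (n - 1) := by
  match n with
  | 0 => simp
  | 1 => simp
  | m + 2 =>
    simpa [Nat.sub_sub] using sum_mul_two_pow_add_sum_mul_mul_two_pow m

/-- Lemma 3.1(ii): for every `n ≥ 1`,
`∑_{i=1}^{n} i·2^{n-i} + ∑_{i=1}^{n-2} i·(n-1-i)·2^{n-2-i} = n·2^{n-1}`,
the second sum being empty for `n ≤ 2`. -/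
theorem sum_mul_two_pow' (n : ℕ) (hn : 1 ≤ n) :
    (∑ i ∈ Finset.Icc 1 n, i * 2 ^ (n - i)) +
      (∑ i ∈ Finset.Icc 1 (n - 2), i * (n - 1 - i) * 2 ^ (n - 2 - i)) =
    n * 2 ^ (n - 1) :=
  sum_mul_two_pow'_general n
end

section
/- For all integers k ≥ 4, t with 1 ≤ t ≤ k−2, and n ≥ k, the k-th order Fibonacci numbers satisfy F^{(k)}_{n+k−1} = ∑_{j=1}^{k−(t+2)} j·F^{(k)}_{n+k−2−j} + (k−t)·∑_{s=0}^{t−1} F^{(k)}_{n+s} + ∑_{i=1}^{k−t} (k−i−t+1)·F^{(k)}_{n−i}, where the first sum is empty (equal to 0) when t = k−2. -/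
/-- The `k`-th order Fibonacci numbers: `F^(k)_0 = ⋯ = F^(k)_{k-2} = 0`,
`F^(k)_{k-1} = 1`, and `F^(k)_n = F^(k)_{n-1} + ⋯ + F^(k)_{n-k}` for `n ≥ k`. -/
def genFib (k : ℕ) (n : ℕ) : ℕ :=
  if n < k then (if n = k - 1 then 1 else 0)
  else if h : n = 0 then 0
  else ∑ i ∈ Finset.range k, genFib k (n - 1 - i)
termination_by n
decreasing_by all_goals omega

/-!
Write `E(t)` for the right-hand side. Unfolding the recurrence for `F_{n+k-1}` and then for
`F_{n+k-2}` gives `E(k-2)`. Splitting the recurrence for `F_{n+t}` at `n`,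
`F_{n+t} = (F_n + ⋯ + F_{n+t-1}) + (F_{n-1} + ⋯ + F_{n-(k-t)})`, and substituting it for one
copy of `F_{n+t}` in `E(t+1)` gives `E(t)`; the identity follows by downward induction on `t`.
-/

open Finset

lemma genFib_eq_sum_Icc {k m : ℕ} (hk : 0 < k) (hm : k ≤ m) :
    genFib k m = ∑ i ∈ Icc 1 k, genFib k (m - i) := by
  rw [genFib, if_neg (by omega), dif_neg (by omega), ← Ico_add_one_right_eq_Icc,
    sum_Ico_eq_sum_range, Nat.add_sub_cancel]
  exact sum_congr rfl fun i _ => by congr 1; omega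

lemma genFib_add_eq {k n t : ℕ} (hk : 0 < k) (ht : t ≤ k) (hn : k ≤ n + t) :
    genFib k (n + t) =
      ∑ s ∈ range t, genFib k (n + s) + ∑ i ∈ Icc 1 (k - t), genFib k (n - i) := by
  rw [genFib_eq_sum_Icc hk hn, ← Ico_add_one_right_eq_Icc,
    ← sum_Ico_consecutive _ (show 1 ≤ t + 1 by omega) (show t + 1 ≤ k + 1 by omega)]
  congr 1
  · rw [sum_Ico_eq_sum_range, Nat.add_sub_cancel, ← sum_range_reflect]
    exact sum_congr rfl fun i hi => by rw [mem_range] at hi; congr 1; omega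
  · rw [← Ico_add_one_right_eq_Icc, sum_Ico_eq_sum_range, sum_Ico_eq_sum_range,
      Nat.add_sub_cancel, show k + 1 - (t + 1) = k - t by omega]
    exact sum_congr rfl fun i _ => by congr 1; omega

def genFibExpansion (k n t : ℕ) : ℕ :=
  (∑ j ∈ Icc 1 (k - (t + 2)), j * genFib k (n + k - 2 - j)) +
    (k - t) * (∑ s ∈ range t, genFib k (n + s)) +
    ∑ i ∈ Icc 1 (k - t), (k - i - t + 1) * genFib k (n - i)

lemma genFib_eq_genFibExpansion_sub_two {k n : ℕ} (hk : 2 ≤ k) (hn : 2 ≤ n) :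
    genFib k (n + k - 1) = genFibExpansion k n (k - 2) := by
  obtain ⟨m, rfl⟩ : ∃ m, k = m + 2 := ⟨k - 2, by omega⟩
  have hlow := genFib_add_eq (k := m + 2) (n := n) (t := m) (by omega) (by omega) (by omega)
  have htop := genFib_add_eq (k := m + 2) (n := n) (t := m + 1) (by omega) (by omega) (by omega)
  have hIcc : Icc 1 2 = {1, 2} := rfl
  have h12 : (1 : ℕ) ≠ 2 := by decide
  rw [show n + (m + 2) - 1 = n + (m + 1) by omega, htop, sum_range_succ, hlow, genFibExpansion,
    Nat.add_sub_cancel, show m + 2 - (m + 1) = 1 by omega, show m + 2 - (m + 2) = 0 by omega,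
    show m + 2 - m = 2 by omega, hIcc, sum_pair h12, sum_pair h12,
    show m + 2 - 1 - m + 1 = 2 by omega, show m + 2 - 2 - m + 1 = 1 by omega]
  simp only [Icc_self, sum_singleton, Icc_eq_empty_of_lt zero_lt_one, sum_empty]
  ring

lemma genFibExpansion_succ {k n t : ℕ} (ht : t + 2 < k) (hn : k ≤ n + t) :
    genFibExpansion k n (t + 1) = genFibExpansion k n t := by
  obtain ⟨c, hc⟩ : ∃ c, k - t = c + 3 := ⟨k - t - 3, by omega⟩
  have hfirst : ∑ j ∈ Icc 1 (k - (t + 2)), j * genFib k (n + k - 2 - j) =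
      ∑ j ∈ Icc 1 (k - (t + 1 + 2)), j * genFib k (n + k - 2 - j) +
        (c + 1) * genFib k (n + t) := by
    rw [show k - (t + 2) = k - (t + 1 + 2) + 1 by omega, sum_Icc_succ_top (by omega)]
    congr 3 <;> omega
  have hlast : ∑ i ∈ Icc 1 (k - t), (k - i - t + 1) * genFib k (n - i) =
      ∑ i ∈ Icc 1 (k - (t + 1)), (k - i - (t + 1) + 1) * genFib k (n - i) +
        ∑ i ∈ Icc 1 (k - t), genFib k (n - i) := by
    have hshift : ∑ i ∈ Icc 1 (k - t), (k - i - t) * genFib k (n - i) =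
        ∑ i ∈ Icc 1 (k - (t + 1)), (k - i - (t + 1) + 1) * genFib k (n - i) := by
      rw [show k - t = k - (t + 1) + 1 by omega, sum_Icc_succ_top (by omega),
        show k - (k - (t + 1) + 1) - t = 0 by omega, zero_mul, add_zero]
      exact sum_congr rfl fun i hi => by rw [mem_Icc] at hi; congr 1; omega
    rw [← hshift, ← sum_add_distrib]
    exact sum_congr rfl fun i _ => by ring
  rw [genFibExpansion, genFibExpansion, hfirst, hlast, sum_range_succ,
    genFib_add_eq (by omega) (by omega) hn, show k - (t + 1) = c + 2 by omega, hc]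
  ring

theorem genFib_linear_identity_general (k t n : ℕ) (hk : 4 ≤ k)
    (ht2 : t ≤ k - 2) (hn : k ≤ n) :
    genFib k (n + k - 1) =
      (∑ j ∈ Finset.Icc 1 (k - (t + 2)), j * genFib k (n + k - 2 - j)) +
      (k - t) * (∑ s ∈ Finset.range t, genFib k (n + s)) +
      ∑ i ∈ Finset.Icc 1 (k - t), (k - i - t + 1) * genFib k (n - i) := by
  suffices genFibExpansion k n (k - 2) = genFibExpansion k n t by
    rw [genFib_eq_genFibExpansion_sub_two (by omega) (by omega), this, genFibExpansion]
  induction ht2 using Nat.decreasingInduction with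
  | self => rfl
  | of_succ s hs ih => rw [ih, genFibExpansion_succ (by omega) (by omega)]

/-- Lemma 3.3(i): for `k ≥ 4`, `1 ≤ t ≤ k-2` and `n ≥ k`,
`F^(k)_{n+k-1} = ∑_{j=1}^{k-(t+2)} j·F^(k)_{n+k-2-j}
  + (k-t)·∑_{s=0}^{t-1} F^(k)_{n+s} + ∑_{i=1}^{k-t} (k-i-t+1)·F^(k)_{n-i}`,
the first sum being empty when `t = k-2`. -/
theorem genFib_linear_identity (k t n : ℕ) (hk : 4 ≤ k) (ht1 : 1 ≤ t)
    (ht2 : t ≤ k - 2) (hn : k ≤ n) :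
    genFib k (n + k - 1) =
      (∑ j ∈ Finset.Icc 1 (k - (t + 2)), j * genFib k (n + k - 2 - j)) +
      (k - t) * (∑ s ∈ Finset.range t, genFib k (n + s)) +
      ∑ i ∈ Finset.Icc 1 (k - t), (k - i - t + 1) * genFib k (n - i) :=
  genFib_linear_identity_general k t n hk ht2 hn
end

section
/- For all integers k ≥ 2 and n ≥ k, the k-th order Fibonacci numbers satisfy ∑_{i=1}^{k} i·F^{(k)}_{n−i} = (2k−1)·F^{(k)}_n − F^{(k)}_{n+k−1} + ∑_{j=1}^{k−3} j·F^{(k)}_{n+k−2−j}, as an identity of integers, where the sum on the right is empty (equal to 0) for k ≤ 3. -/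
lemma genFib_rec (k m : ℕ) (hk : 1 ≤ k) (hm : k ≤ m) :
    genFib k m = ∑ i ∈ Finset.range k, genFib k (m - 1 - i) := by
  rw [genFib, if_neg (by omega), dif_neg (by omega)]

lemma genFib_two (k m : ℕ) (hk : 1 ≤ k) (hm : k ≤ m) :
    genFib k (m + 1) + genFib k (m - k) = 2 * genFib k m := by
  obtain ⟨l, rfl⟩ : ∃ l, k = l + 1 := ⟨k - 1, by omega⟩
  have h1 : genFib (l+1) (m+1) = genFib (l+1) m + ∑ i ∈ Finset.range l, genFib (l+1) (m - 1 - i) := by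
    rw [genFib_rec (l+1) (m+1) (by omega) (by omega), Finset.sum_range_succ', add_comm]
    congr 1
    · norm_num
      exact Finset.sum_congr rfl fun i _ => by congr 1; omega
  have h2 : genFib (l+1) m = ∑ i ∈ Finset.range l, genFib (l+1) (m - 1 - i) + genFib (l+1) (m - (l+1)) := by
    rw [genFib_rec (l+1) m (by omega) hm, Finset.sum_range_succ]
    congr 2; omega
  set X := ∑ i ∈ Finset.range l, genFib (l+1) (m - 1 - i)
  omega

lemma aux_id (k : ℕ) (hk : 2 ≤ k) (a : ℕ → ℤ)
    (ha : a k = ∑ t ∈ Finset.range k, a t) :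
    ∑ i ∈ Finset.Icc 1 k, (i : ℤ) * (2 * a (k - i) - a (k - i + 1)) =
      (2 * (k : ℤ) - 1) * a 0 - a (k - 1) +
      ∑ j ∈ Finset.Icc 1 (k - 3), (j : ℤ) * a (k - 2 - j) := by
  set S0 : ℤ := ∑ j ∈ Finset.range (k + 1), ((k : ℤ) - j) * a j with hS0
  set S1 : ℤ := ∑ j ∈ Finset.range (k + 1), a j with hS1
  have hS1' : S1 = 2 * a k := by
    rw [hS1, Finset.sum_range_succ, ← ha]; ring
  have hL : ∑ i ∈ Finset.Icc 1 k, (i : ℤ) * (2 * a (k - i) - a (k - i + 1)) =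
      2 * S0 - (S0 + S1 - ((k : ℤ) + 1) * a 0) := by
    have e1 : ∑ i ∈ Finset.Icc 1 k, (i : ℤ) * (2 * a (k - i) - a (k - i + 1))
        = ∑ i ∈ Finset.range k, (fun t => ((k : ℤ) - t) * (2 * a t - a (t + 1))) (k - 1 - i) := by
      rw [← Finset.Ico_add_one_right_eq_Icc, Finset.sum_Ico_eq_sum_range]
      apply Finset.sum_congr (by congr 1)
      intro i hi
      simp only [Finset.mem_range] at hi
      have h1 : k - (1 + i) = k - 1 - i := by omega
      have h2 : ((1 + i : ℕ) : ℤ) = (k : ℤ) - ((k - 1 - i : ℕ) : ℤ) := by omega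
      simp only [h1, h2]
    rw [e1.trans (Finset.sum_range_reflect (fun t => ((k : ℤ) - t) * (2 * a t - a (t + 1))) k)]
    rw [Finset.sum_congr rfl (fun i _ => by ring :
      ∀ i ∈ Finset.range k, ((k : ℤ) - i) * (2 * a i - a (i + 1)) =
        2 * (((k : ℤ) - i) * a i) - ((k : ℤ) - i) * a (i + 1)),
      Finset.sum_sub_distrib, ← Finset.mul_sum]
    have hP : ∑ i ∈ Finset.range k, ((k : ℤ) - i) * a i = S0 := by
      rw [hS0, Finset.sum_range_succ]; simp
    have hQ : ∑ i ∈ Finset.range k, ((k : ℤ) - i) * a (i + 1) = S0 + S1 - ((k : ℤ) + 1) * a 0 := by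
      have e2 := Finset.sum_range_succ' (fun j => ((k : ℤ) + 1 - j) * a j) k
      have e3 : ∑ j ∈ Finset.range (k + 1), ((k : ℤ) + 1 - j) * a j = S0 + S1 := by
        rw [hS0, hS1, ← Finset.sum_add_distrib]
        exact Finset.sum_congr rfl fun j _ => by push_cast; ring
      have e4 : ∑ i ∈ Finset.range k, ((k : ℤ) + 1 - (↑(i + 1) : ℤ)) * a (i + 1)
          = ∑ i ∈ Finset.range k, ((k : ℤ) - i) * a (i + 1) :=
        Finset.sum_congr rfl fun i _ => by push_cast; ring
      rw [e3, e4] at e2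
      push_cast at e2
      linarith
    rw [hP, hQ]
  have hR : ∑ j ∈ Finset.Icc 1 (k - 3), (j : ℤ) * a (k - 2 - j) =
      (S0 - 2 * S1 + a (k - 1) + 2 * a k) - ((k : ℤ) - 2) * a 0 := by
    rcases Nat.lt_or_ge k 3 with h3 | h3
    · obtain rfl : k = 2 := by omega
      rw [hS0, hS1]
      simp [Finset.sum_range_succ]
      ring
    · obtain ⟨m, rfl⟩ : ∃ m, k = m + 3 := ⟨k - 3, by omega⟩
      rw [hS0, hS1]
      have e1 : ∑ j ∈ Finset.Icc 1 (m + 3 - 3), (j : ℤ) * a (m + 3 - 2 - j)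
          = ∑ j ∈ Finset.range m, (fun t => ((m : ℤ) - t) * a (t + 1)) (m - 1 - j) := by
        rw [show m + 3 - 3 = m from rfl, ← Finset.Ico_add_one_right_eq_Icc, Finset.sum_Ico_eq_sum_range]
        apply Finset.sum_congr (by congr 1)
        intro j hj
        simp only [Finset.mem_range] at hj
        have h1 : m + 3 - 2 - (1 + j) = m - 1 - j + 1 := by omega
        have h2 : ((1 + j : ℕ) : ℤ) = (m : ℤ) - ((m - 1 - j : ℕ) : ℤ) := by omega
        simp only [h1, h2]
      rw [e1.trans (Finset.sum_range_reflect (fun t => ((m : ℤ) - t) * a (t + 1)) m)]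
      have e2 := Finset.sum_range_succ' (fun j => ((m : ℤ) + 1 - j) * a j) m
      have e3 : ∑ t ∈ Finset.range m, ((m : ℤ) + 1 - (↑(t + 1) : ℤ)) * a (t + 1)
          = ∑ t ∈ Finset.range m, ((m : ℤ) - t) * a (t + 1) :=
        Finset.sum_congr rfl fun t _ => by push_cast; ring
      rw [e3] at e2
      have e4 : ∑ j ∈ Finset.range (m + 3 + 1), ((m : ℤ) + 1 - j) * a j
          = ∑ j ∈ Finset.range (m + 1), ((m : ℤ) + 1 - j) * a j
            - a (m + 2) - 2 * a (m + 3) := by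
        rw [show m + 3 + 1 = (m + 1) + 1 + 1 + 1 from rfl, Finset.sum_range_succ,
          Finset.sum_range_succ, Finset.sum_range_succ]
        push_cast
        ring
      have e5 : ∑ j ∈ Finset.range (m + 3 + 1), ((m : ℤ) + 1 - j) * a j
          = (∑ j ∈ Finset.range (m + 3 + 1), ((m : ℤ) + 3 - j) * a j)
            - 2 * ∑ j ∈ Finset.range (m + 3 + 1), a j := by
        rw [Finset.mul_sum, ← Finset.sum_sub_distrib]
        exact Finset.sum_congr rfl fun j _ => by ring
      have h1 : m + 3 - 1 = m + 2 := rfl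
      push_cast [h1] at *
      linarith
  rw [hL, hR, hS1']
  ring

/-- Lemma 3.3(ii): for `k ≥ 2` and `n ≥ k`, as an identity of integers,
`∑_{i=1}^{k} i·F^(k)_{n-i} = (2k-1)·F^(k)_n - F^(k)_{n+k-1}
  + ∑_{j=1}^{k-3} j·F^(k)_{n+k-2-j}`,
the sum on the right being empty for `k ≤ 3`. -/
theorem genFib_weighted_sum (k n : ℕ) (hk : 2 ≤ k) (hn : k ≤ n) :
    (∑ i ∈ Finset.Icc 1 k, (i : ℤ) * genFib k (n - i)) =
      (2 * (k : ℤ) - 1) * genFib k n - genFib k (n + k - 1) +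
      ∑ j ∈ Finset.Icc 1 (k - 3), (j : ℤ) * genFib k (n + k - 2 - j) := by
  have ha : (genFib k (n + k) : ℤ) = ∑ t ∈ Finset.range k, (genFib k (n + t) : ℤ) := by
    have h0 : (genFib k (n + k) : ℤ)
        = ∑ i ∈ Finset.range k, (fun t => (genFib k (n + t) : ℤ)) (k - 1 - i) := by
      rw [genFib_rec k (n + k) (by omega) (by omega)]
      push_cast
      exact Finset.sum_congr rfl fun i hi => by
        simp only [Finset.mem_range] at hi
        congr 2
        omega
    exact h0.trans (Finset.sum_range_reflect (fun t => (genFib k (n + t) : ℤ)) k)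
  have key := aux_id k hk (fun t => (genFib k (n + t) : ℤ)) ha
  calc ∑ i ∈ Finset.Icc 1 k, (i : ℤ) * genFib k (n - i)
      = ∑ i ∈ Finset.Icc 1 k, (i : ℤ) *
          (2 * (genFib k (n + (k - i)) : ℤ) - (genFib k (n + (k - i + 1)) : ℤ)) := by
        apply Finset.sum_congr rfl
        intro i hi
        simp only [Finset.mem_Icc] at hi
        congr 1
        have h2 := genFib_two k (n + k - i) (by omega) (by omega)
        have e1 : n + (k - i) = n + k - i := by omega
        have e2 : n + (k - i + 1) = n + k - i + 1 := by omega
        have e3 : n + k - i - k = n - i := by omega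
        rw [e1, e2]
        rw [e3] at h2
        omega
    _ = (2 * (k : ℤ) - 1) * genFib k (n + 0) - genFib k (n + (k - 1)) +
        ∑ j ∈ Finset.Icc 1 (k - 3), (j : ℤ) * genFib k (n + (k - 2 - j)) := key
    _ = (2 * (k : ℤ) - 1) * genFib k n - genFib k (n + k - 1) +
        ∑ j ∈ Finset.Icc 1 (k - 3), (j : ℤ) * genFib k (n + k - 2 - j) := by
        congr 1
        · rw [show n + (k - 1) = n + k - 1 from by omega, Nat.add_zero]
        · apply Finset.sum_congr rfl
          intro j hj
          simp only [Finset.mem_Icc] at hj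
          rw [show n + (k - 2 - j) = n + k - 2 - j from by omega]
end

section
/- For all integers k ≥ 2 and n ≥ 1, the numbers of edges of k-th order Fibonacci cubes satisfy, as an identity of integers, (k+1)·e^{(k)}_n − 2k·e^{(k)}_{n−1} = (n+k)·F^{(k)}_{n+k−1} − k·(n+1)·F^{(k)}_{n−1}. -/
section Fibcube

open Finset

open Finset

lemma genFib_small (k m : ℕ) (h : m < k) : genFib k m = if m = k-1 then 1 else 0 := by
  rw [genFib]; simp [h]

lemma gdef (k m : ℕ) (hk : 1 ≤ k) : genFib k (m+k) = ∑ t ∈ range k, genFib k (m+t) := by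
  rw [genFib]
  have h1 : ¬ (m+k < k) := by omega
  have h2 : ¬ (m+k = 0) := by omega
  rw [if_neg h1, dif_neg h2, ← Finset.sum_range_reflect]
  apply Finset.sum_congr rfl
  intro i hi
  simp only [mem_range] at hi
  congr 1
  omega

lemma grec (k m : ℕ) (hk : 1 ≤ k) :
    genFib k (m+k+1) + genFib k m = 2 * genFib k (m+k) := by
  have h1 := gdef k (m+1) hk
  have h2 := gdef k m hk
  have e1 : ∑ t ∈ range (k+1), genFib k (m+t)
      = ∑ t ∈ range k, genFib k (m+1+t) + genFib k m := by
    rw [Finset.sum_range_succ']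
    congr 1
    apply Finset.sum_congr rfl
    intro t _
    congr 1
    omega
  have e2 : ∑ t ∈ range (k+1), genFib k (m+t)
      = ∑ t ∈ range k, genFib k (m+t) + genFib k (m+k) := Finset.sum_range_succ _ _
  calc genFib k (m+k+1) + genFib k m
      = (∑ t ∈ range k, genFib k (m+1+t)) + genFib k m := by
        rw [show m+k+1 = m+1+k by ring, h1]
    _ = ∑ t ∈ range (k+1), genFib k (m+t) := e1.symm
    _ = ∑ t ∈ range k, genFib k (m+t) + genFib k (m+k) := e2
    _ = 2 * genFib k (m+k) := by rw [← h2]; ring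

lemma sum_two_pow (m : ℕ) : 1 + ∑ j ∈ range m, 2^j = 2^m := by
  induction m with
  | zero => simp
  | succ m ih => rw [Finset.sum_range_succ, pow_succ]; omega

lemma genFib_shift_small (k : ℕ) (hk : 1 ≤ k) : ∀ m, m < k → genFib k (m+k) = 2^m := by
  intro m
  induction m using Nat.strong_induction_on with
  | _ m ih =>
    intro hm
    rw [gdef k m hk]
    obtain ⟨d, hd⟩ : ∃ d, k = d + m := ⟨k - m, by omega⟩
    have hd1 : 1 ≤ d := by omega
    rw [show range k = range (d + m) by rw [hd], Finset.sum_range_add]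
    have e1 : ∑ t ∈ range d, genFib k (m+t) = 1 := by
      have : ∀ t ∈ range d, genFib k (m+t) = if t = d-1 then 1 else 0 := by
        intro t ht
        simp only [mem_range] at ht
        rw [genFib_small k _ (by omega)]
        congr 1
        simp only [eq_iff_iff]
        omega
      rw [Finset.sum_congr rfl this, Finset.sum_ite_eq' (range d) (d-1)]
      simp [mem_range]; omega
    have e2 : ∑ t ∈ range m, genFib k (m+(d+t)) = ∑ t ∈ range m, 2^t := by
      apply Finset.sum_congr rfl
      intro t ht
      simp only [mem_range] at ht
      rw [show m+(d+t) = t+k by omega]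
      exact ih t (by omega) (by omega)
    rw [e1, e2]
    have := sum_two_pow m
    omega


attribute [local instance] Classical.propDecidable

noncomputable def vset (k n : ℕ) : Finset (Fin n → Bool) :=
  Finset.univ.filter (fun s => ¬ hasKOnes k s)

lemma mem_vset {k n : ℕ} {s : Fin n → Bool} : s ∈ vset k n ↔ ¬ hasKOnes k s := by
  simp [vset]

def ones {n : ℕ} (s : Fin n → Bool) : ℕ := ∑ i : Fin n, (s i).toNat

noncomputable def vcount (k n : ℕ) : ℕ := (vset k n).card

noncomputable def bcount (k n : ℕ) : ℕ := ∑ s ∈ vset k n, ones s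

/-- extension of a string to ℕ by `false`. -/
def extb {n : ℕ} (s : Fin n → Bool) (i : ℕ) : Bool := if h : i < n then s ⟨i, h⟩ else false

lemma extb_lt {n : ℕ} (s : Fin n → Bool) {i : ℕ} (h : i < n) : extb s i = s ⟨i, h⟩ := dif_pos h

lemma hasKOnes_iff {k n : ℕ} (hk : 1 ≤ k) (s : Fin n → Bool) :
    hasKOnes k s ↔ ∃ i : ℕ, ∀ j : ℕ, j < k → extb s (i + j) = true := by
  constructor
  · rintro ⟨i, h, hr⟩
    exact ⟨i, fun j hj => by rw [extb_lt s (by omega)]; exact hr j hj⟩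
  · rintro ⟨i, hr⟩
    have hin : i + k ≤ n := by
      by_contra hc
      have h1 := hr (k - 1) (by omega)
      rw [extb, dif_neg (by omega)] at h1
      exact Bool.false_ne_true h1
    refine ⟨i, hin, fun j hj => ?_⟩
    have h1 := hr j hj
    rwa [extb_lt s (by omega)] at h1

lemma hasKOnes_small {k n : ℕ} (h : n < k) (s : Fin n → Bool) : ¬ hasKOnes k s := by
  rintro ⟨i, hin, -⟩; omega

lemma vset_small {k n : ℕ} (h : n < k) : vset k n = univ := by
  ext s; simp [mem_vset, hasKOnes_small h]

lemma vcount_small {k n : ℕ} (h : n < k) : vcount k n = 2 ^ n := by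
  rw [vcount, vset_small h, card_univ]
  simp

lemma hasKOnes_len_k {k : ℕ} (hk : 1 ≤ k) (s : Fin k → Bool) :
    hasKOnes k s ↔ s = fun _ => true := by
  constructor
  · rintro ⟨i, hin, hr⟩
    have hi0 : i = 0 := by omega
    subst hi0
    funext j
    have h1 := hr j.val j.isLt
    have h2 : (⟨0 + j.val, by omega⟩ : Fin k) = j := by ext; simp
    rwa [h2] at h1
  · rintro rfl
    exact ⟨0, by omega, fun j hj => rfl⟩

lemma vset_k {k : ℕ} (hk : 1 ≤ k) : vset k k = univ \ {fun _ => true} := by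
  ext s
  simp [mem_vset, hasKOnes_len_k hk]

lemma vcount_k {k : ℕ} (hk : 1 ≤ k) : vcount k k + 1 = 2 ^ k := by
  have h1 : ({fun _ => true} : Finset (Fin k → Bool)) ⊆ univ := subset_univ _
  have h2 := Finset.card_sdiff_add_card_eq_card h1
  rw [vcount, vset_k hk]
  simpa using h2

lemma ones_cons {n : ℕ} (c : Bool) (u : Fin n → Bool) :
    ones (Fin.cons c u) = c.toNat + ones u := by
  rw [ones, Fin.sum_univ_succ]
  simp [ones]

lemma total_ones : ∀ n : ℕ, 2 * ∑ s : Fin n → Bool, ones s = n * 2 ^ n := by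
  intro n
  induction n with
  | zero => simp [ones]
  | succ n ih =>
    have e : ∑ s : Fin (n+1) → Bool, ones s
        = ∑ p : Bool × (Fin n → Bool), ones (Fin.cons p.1 p.2) := by
      apply Fintype.sum_equiv (Fin.consEquiv (fun _ => Bool)).symm
      intro s
      have : (Fin.consEquiv (fun _ => Bool)).symm s = (s 0, Fin.tail s) := rfl
      rw [this]
      simp [Fin.cons_self_tail]
    rw [e]
    have e2 : ∑ p : Bool × (Fin n → Bool), ones (Fin.cons p.1 p.2)
        = ∑ c : Bool, ∑ u : Fin n → Bool, (c.toNat + ones u) := by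
      rw [Fintype.sum_prod_type]
      exact Finset.sum_congr rfl fun c _ => Finset.sum_congr rfl fun u _ => ones_cons c u
    rw [e2, Fintype.sum_bool]
    simp only [Bool.toNat_true, Bool.toNat_false, zero_add, Finset.sum_add_distrib,
      Finset.sum_const, card_univ, smul_eq_mul, mul_one]
    have hcard : Fintype.card (Fin n → Bool) = 2 ^ n := by simp
    rw [hcard]
    have h3 : (n+1) * 2^(n+1) = 2 * 2^n + 2 * (n * 2^n) := by ring
    rw [h3, ← ih]
    ring

lemma bcount_small {k n : ℕ} (h : n < k) : 2 * bcount k n = n * 2 ^ n := by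
  rw [bcount, vset_small h]
  exact total_ones n

lemma ones_const_true (k : ℕ) : ones (fun _ => true : Fin k → Bool) = k := by
  simp [ones]

lemma bcount_k {k : ℕ} (hk : 1 ≤ k) : 2 * bcount k k + 2 * k = k * 2 ^ k := by
  have h1 : ({fun _ => true} : Finset (Fin k → Bool)) ⊆ univ := subset_univ _
  have h2 := Finset.sum_sdiff (M := ℕ) (f := ones) h1
  rw [Finset.sum_singleton, ones_const_true] at h2
  have h3 : bcount k k = ∑ x ∈ (univ \ {fun _ => true} : Finset (Fin k → Bool)), ones x := by
    rw [bcount, vset_k hk]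
  have h4 := total_ones k
  omega

def pref (k m : ℕ) (w : Fin m → Bool) : Fin (m+k) → Bool :=
  fun i => if i.val + 1 < k then true
    else if i.val + 1 = k then false
    else extb w (i.val - k)

def begOnes (k : ℕ) {n : ℕ} (u : Fin n → Bool) : Prop :=
  ∀ t : ℕ, t < k - 1 → extb u t = true

def drp (k m : ℕ) (u : Fin (m+k) → Bool) : Fin m → Bool :=
  fun j => u ⟨j.val + k, by omega⟩

lemma extb_pref (k m : ℕ) (hk : 1 ≤ k) (w : Fin m → Bool) (t : ℕ) :
    extb (pref k m w) t
      = if t < k - 1 then true else if t = k - 1 then false else extb w (t - k) := by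
  by_cases h : t < m + k
  · rw [extb_lt _ h]
    show (if t + 1 < k then true else if t + 1 = k then false else extb w (t - k)) = _
    by_cases h1 : t + 1 < k
    · rw [if_pos h1, if_pos (by omega)]
    · by_cases h2 : t + 1 = k
      · rw [if_neg h1, if_pos h2, if_neg (by omega), if_pos (by omega)]
      · rw [if_neg h1, if_neg h2, if_neg (by omega), if_neg (by omega)]
  · rw [extb, dif_neg h, if_neg (by omega), if_neg (by omega), extb, dif_neg (by omega)]

lemma extb_tail {n : ℕ} (s : Fin (n+1) → Bool) (t : ℕ) :
    extb (Fin.tail s) t = extb s (t+1) := by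
  by_cases h : t < n
  · rw [extb_lt _ h, extb_lt _ (by omega)]; rfl
  · rw [extb, dif_neg h, extb, dif_neg (by omega)]

lemma extb_zero {n : ℕ} (s : Fin (n+1) → Bool) : extb s 0 = s 0 := by
  rw [extb_lt _ (Nat.succ_pos n)]; rfl

lemma hasKOnes_cons_iff {k n : ℕ} (hk : 1 ≤ k) (s : Fin (n+1) → Bool) :
    hasKOnes k s ↔ hasKOnes k (Fin.tail s) ∨ (s 0 = true ∧ begOnes k (Fin.tail s)) := by
  rw [hasKOnes_iff hk, hasKOnes_iff hk (Fin.tail s)]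
  constructor
  · rintro ⟨i, run⟩
    match i with
    | 0 =>
      right
      constructor
      · have h0 : extb s 0 = true := by simpa using run 0 (by omega)
        rwa [extb_zero] at h0
      · intro t ht
        rw [extb_tail]
        have h1 := run (t+1) (by omega)
        rwa [Nat.zero_add] at h1
    | i+1 =>
      left
      exact ⟨i, fun j hj => by rw [extb_tail]; rw [show i + j + 1 = i + 1 + j by omega]; exact run j hj⟩
  · rintro (⟨i, run⟩ | ⟨h0, hbeg⟩)
    · exact ⟨i+1, fun j hj => by rw [show i + 1 + j = i + j + 1 by omega, ← extb_tail]; exact run j hj⟩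
    · refine ⟨0, fun j hj => ?_⟩
      rw [Nat.zero_add]
      match j with
      | 0 => rwa [extb_zero]
      | t+1 =>
        rw [← extb_tail]
        exact hbeg t (by omega)

lemma hasKOnes_pref_iff {k m : ℕ} (hk : 1 ≤ k) (w : Fin m → Bool) :
    hasKOnes k (pref k m w) ↔ hasKOnes k w := by
  rw [hasKOnes_iff hk, hasKOnes_iff hk w]
  constructor
  · rintro ⟨i, run⟩
    have hik : k ≤ i := by
      by_contra hc
      have h1 := run (k - 1 - i) (by omega)
      rw [extb_pref k m hk, if_neg (by omega), if_pos (by omega)] at h1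
      exact Bool.false_ne_true h1
    refine ⟨i - k, fun j hj => ?_⟩
    have h1 := run j hj
    rw [extb_pref k m hk, if_neg (by omega), if_neg (by omega),
      show i + j - k = i - k + j by omega] at h1
    exact h1
  · rintro ⟨i, run⟩
    refine ⟨i + k, fun j hj => ?_⟩
    rw [extb_pref k m hk, if_neg (by omega), if_neg (by omega),
      show i + k + j - k = i + j by omega]
    exact run j hj

lemma begOnes_pref {k m : ℕ} (hk : 1 ≤ k) (w : Fin m → Bool) : begOnes k (pref k m w) := by
  intro t ht
  rw [extb_pref k m hk, if_pos ht]

lemma drp_pref {k m : ℕ} (w : Fin m → Bool) : drp k m (pref k m w) = w := by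
  funext j
  show (if j.val + k + 1 < k then true else if j.val + k + 1 = k then false
    else extb w (j.val + k - k)) = w j
  rw [if_neg (by omega), if_neg (by omega), show j.val + k - k = j.val by omega,
    extb_lt _ j.isLt]

lemma pref_drp {k m : ℕ} (hk : 1 ≤ k) (u : Fin (m+k) → Bool)
    (hv : ¬ hasKOnes k u) (hb : begOnes k u) : pref k m (drp k m u) = u := by
  have hkf : extb u (k-1) = false := by
    cases hcase : extb u (k-1) with
    | false => rfl
    | true =>
      exfalso
      apply hv
      rw [hasKOnes_iff hk]
      refine ⟨0, fun j hj => ?_⟩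
      rcases Nat.lt_or_ge j (k-1) with h | h
      · rw [show 0 + j = j by omega]; exact hb j h
      · rw [show 0 + j = k - 1 by omega]; exact hcase
  funext i
  show (if i.val + 1 < k then true else if i.val + 1 = k then false
    else extb (drp k m u) (i.val - k)) = u i
  by_cases h1 : i.val + 1 < k
  · rw [if_pos h1]
    have := hb i.val (by omega)
    rw [extb_lt _ i.isLt] at this
    exact this.symm
  · by_cases h2 : i.val + 1 = k
    · rw [if_neg h1, if_pos h2]
      rw [show (k : ℕ) - 1 = i.val by omega, extb_lt _ i.isLt] at hkf
      exact hkf.symm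
    · rw [if_neg h1, if_neg h2, extb_lt _ (show i.val - k < m by omega)]
      show u ⟨i.val - k + k, _⟩ = u i
      congr 1
      ext
      simp
      omega

lemma ones_eq_range {n : ℕ} (s : Fin n → Bool) :
    ones s = ∑ t ∈ range n, (extb s t).toNat := by
  rw [ones, ← Fin.sum_univ_eq_sum_range (fun t => (extb s t).toNat) n]
  apply Finset.sum_congr rfl
  intro i _
  rw [extb_lt _ i.isLt]

lemma ones_pref {k m : ℕ} (hk : 1 ≤ k) (w : Fin m → Bool) :
    ones (pref k m w) = (k - 1) + ones w := by
  obtain ⟨K, rfl⟩ : ∃ K, k = K + 1 := ⟨k - 1, by omega⟩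
  simp only [Nat.add_sub_cancel]
  rw [ones_eq_range, show range (m + (K+1)) = range ((K+1) + m) from by rw [Nat.add_comm],
    Finset.sum_range_add]
  congr 1
  · have e : ∀ t ∈ range (K+1), (extb (pref (K+1) m w) t).toNat
        = if t < K then 1 else 0 := by
      intro t ht
      simp only [mem_range] at ht
      rw [extb_pref (K+1) m (by omega), Nat.add_sub_cancel]
      by_cases h1 : t < K
      · rw [if_pos h1, if_pos h1]; rfl
      · rw [if_neg h1, if_pos (by omega), if_neg h1]; rfl
    rw [Finset.sum_congr rfl e, Finset.sum_range_succ, if_neg (by omega)]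
    have e2 : ∀ t ∈ range K, (if t < K then (1:ℕ) else 0) = 1 := by
      intro t ht; simp only [mem_range] at ht; rw [if_pos ht]
    rw [Finset.sum_congr rfl e2]
    simp
  · rw [ones_eq_range]
    apply Finset.sum_congr rfl
    intro j hj
    simp only [mem_range] at hj
    rw [extb_pref (K+1) m (by omega), if_neg (by omega), if_neg (by omega),
      show K + 1 + j - (K + 1) = j by omega]

lemma master (k m : ℕ) (hk : 1 ≤ k) (f : Bool × (Fin (m+k) → Bool) → ℕ) :
    ∑ p ∈ univ ×ˢ vset k (m+k), f p
      = (∑ s ∈ vset k (m+k+1), f (s 0, Fin.tail s)) + ∑ w ∈ vset k m, f (true, pref k m w) := by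
  rw [← Finset.sum_filter_add_sum_filter_not (univ ×ˢ vset k (m+k))
    (fun p => ¬ (p.1 = true ∧ begOnes k p.2)) f]
  congr 1
  · apply Finset.sum_nbij' (i := fun (p : Bool × (Fin (m+k) → Bool)) => Fin.cons p.1 p.2)
      (j := fun (s : Fin (m+k+1) → Bool) => (s 0, Fin.tail s))
    · intro p hp
      simp only [Finset.mem_filter, Finset.mem_product, mem_univ, true_and, mem_vset] at hp ⊢
      obtain ⟨hp1, hp2⟩ := hp
      rw [hasKOnes_cons_iff hk, Fin.tail_cons, Fin.cons_zero]
      rintro (hc | hc)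
      · exact hp1 hc
      · exact hp2 hc
    · intro s hs
      simp only [Finset.mem_filter, Finset.mem_product, mem_univ, true_and, mem_vset] at hs ⊢
      rw [hasKOnes_cons_iff hk] at hs
      push_neg at hs
      exact ⟨hs.1, fun hc => hs.2 hc.1 hc.2⟩
    · intro p _
      simp
    · intro s _
      exact Fin.cons_self_tail s
    · intro p _
      simp
  · apply (Finset.sum_nbij' (i := fun (w : Fin m → Bool) => ((true : Bool), pref k m w))
      (j := fun (p : Bool × (Fin (m+k) → Bool)) => drp k m p.2) ?_ ?_ ?_ ?_ ?_).symm
    · intro w hw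
      simp only [Finset.mem_filter, Finset.mem_product, mem_univ, true_and, mem_vset, not_not] at hw ⊢
      exact ⟨by rw [hasKOnes_pref_iff hk]; exact hw, begOnes_pref hk w⟩
    · intro p hp
      simp only [Finset.mem_filter, Finset.mem_product, mem_univ, true_and, mem_vset, not_not] at hp ⊢
      obtain ⟨hp1, hp2, hp3⟩ := hp
      have he : pref k m (drp k m p.2) = p.2 := pref_drp hk p.2 hp1 hp3
      intro hc
      apply hp1
      rw [← he, hasKOnes_pref_iff hk]
      exact hc
    · intro w _
      exact drp_pref w
    · intro p hp
      simp only [Finset.mem_filter, Finset.mem_product, mem_univ, true_and, mem_vset, not_not] at hp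
      obtain ⟨hp1, hp2, hp3⟩ := hp
      have he : pref k m (drp k m p.2) = p.2 := pref_drp hk p.2 hp1 hp3
      show ((true : Bool), pref k m (drp k m p.2)) = p
      rw [he]
      exact Prod.ext hp2.symm rfl
    · intro w _
      rfl

lemma vrec (k m : ℕ) (hk : 1 ≤ k) :
    vcount k (m+k+1) + vcount k m = 2 * vcount k (m+k) := by
  have h := master k m hk (fun _ => 1)
  simp only [Finset.sum_const, smul_eq_mul, mul_one, Finset.card_product] at h
  rw [card_univ] at h
  simp only [Fintype.card_bool] at h
  rw [vcount, vcount, vcount]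
  omega

lemma ones_head_tail {n : ℕ} (s : Fin (n+1) → Bool) :
    ones s = (s 0).toNat + ones (Fin.tail s) := by
  conv_lhs => rw [← Fin.cons_self_tail s]
  rw [ones_cons]

lemma brec (k m : ℕ) (hk : 1 ≤ k) :
    bcount k (m+k+1) + bcount k m + k * vcount k m
      = vcount k (m+k) + 2 * bcount k (m+k) := by
  have h := master k m hk (fun p => p.1.toNat + ones p.2)
  rw [Finset.sum_product] at h
  rw [show (univ : Finset Bool) = {false, true} from by simp [Finset.ext_iff]] at h
  rw [Finset.sum_insert (by simp), Finset.sum_singleton] at h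
  simp only [Bool.toNat_false, Bool.toNat_true, zero_add] at h
  have e1 : ∑ u ∈ vset k (m+k), (1 + ones u) = vcount k (m+k) + bcount k (m+k) := by
    rw [Finset.sum_add_distrib, Finset.sum_const, smul_eq_mul, mul_one, vcount, bcount]
  have e2 : ∑ s ∈ vset k (m+k+1), ((s 0).toNat + ones (Fin.tail s)) = bcount k (m+k+1) := by
    rw [bcount]
    exact Finset.sum_congr rfl fun s _ => (ones_head_tail s).symm
  have e3 : ∑ w ∈ vset k m, (1 + ones (pref k m w))
      = vcount k m + ((k-1) * vcount k m + bcount k m) := by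
    have : ∀ w ∈ vset k m, 1 + ones (pref k m w) = 1 + ((k-1) + ones w) :=
      fun w _ => by rw [ones_pref hk w]
    rw [Finset.sum_congr rfl this]
    simp only [Finset.sum_add_distrib, Finset.sum_const, smul_eq_mul, mul_one]
    rw [vcount, bcount]
    ring
  have hone : ∑ u ∈ vset k (m+k), ones u = bcount k (m+k) := by rw [bcount]
  rw [e1, e2, e3, hone] at h
  clear e1 e2 e3 hone
  have hsplit : k * vcount k m = (k-1) * vcount k m + vcount k m := by
    have hkk : k = (k-1) + 1 := by omega
    nth_rewrite 1 [hkk]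
    ring
  omega

lemma total_ones' : ∀ n : ℕ, ∑ s : Fin (n+1) → Bool, ones s = (n+1) * 2^n := by
  have step : ∀ n : ℕ, ∑ s : Fin (n+1) → Bool, ones s
      = 2^n + 2 * ∑ s : Fin n → Bool, ones s := by
    intro n
    have e : ∑ s : Fin (n+1) → Bool, ones s
        = ∑ p : Bool × (Fin n → Bool), ones (Fin.cons p.1 p.2) := by
      apply Fintype.sum_equiv (Fin.consEquiv (fun _ => Bool)).symm
      intro s
      have : (Fin.consEquiv (fun _ => Bool)).symm s = (s 0, Fin.tail s) := rfl
      rw [this]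
      simp [Fin.cons_self_tail]
    rw [e]
    have e2 : ∑ p : Bool × (Fin n → Bool), ones (Fin.cons p.1 p.2)
        = ∑ c : Bool, ∑ u : Fin n → Bool, (c.toNat + ones u) := by
      rw [Fintype.sum_prod_type]
      exact Finset.sum_congr rfl fun c _ => Finset.sum_congr rfl fun u _ => ones_cons c u
    rw [e2, Fintype.sum_bool]
    simp only [Bool.toNat_true, Bool.toNat_false, zero_add, Finset.sum_add_distrib,
      Finset.sum_const, card_univ, smul_eq_mul, mul_one]
    have hcard : Fintype.card (Fin n → Bool) = 2 ^ n := by simp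
    rw [hcard]
    ring
  intro n
  induction n with
  | zero => rw [step 0]; simp [ones]
  | succ n ih => rw [step (n+1), ih]; ring

lemma bcount_zero (k : ℕ) : bcount k 0 = 0 := by
  rw [bcount]
  apply Finset.sum_eq_zero
  intro s _
  simp [ones]

lemma bcount_small' {k m : ℕ} (h : m + 1 < k) : bcount k (m+1) = (m+1) * 2^m := by
  rw [bcount, vset_small h]
  exact total_ones' m

lemma bcount_k' {k : ℕ} (hk : 1 ≤ k) : bcount k k + k = k * 2^(k-1) := by
  have h1 : ({fun _ => true} : Finset (Fin k → Bool)) ⊆ univ := subset_univ _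
  have h2 := Finset.sum_sdiff (M := ℕ) (f := ones) h1
  rw [Finset.sum_singleton, ones_const_true] at h2
  have h3 : bcount k k = ∑ x ∈ (univ \ {fun _ => true} : Finset (Fin k → Bool)), ones x := by
    rw [bcount, vset_k hk]
  obtain ⟨i, rfl⟩ : ∃ i, k = i + 1 := ⟨k - 1, by omega⟩
  have h4 := total_ones' i
  simp only [Nat.add_sub_cancel]
  omega

lemma genFib_eq_vcount (k : ℕ) (hk : 1 ≤ k) : ∀ m, genFib k (m+k) = vcount k m := by
  intro m
  induction m using Nat.strong_induction_on with
  | _ m ih =>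
    rcases lt_trichotomy m k with h | h | h
    · rw [genFib_shift_small k hk m h, vcount_small h]
    · subst h
      have hg := grec m (m-1) hk
      have h1 : genFib m (m-1) = 1 := by
        rw [genFib_small m _ (by omega), if_pos rfl]
      have h2 : genFib m ((m-1)+m) = 2^(m-1) := genFib_shift_small m hk (m-1) (by omega)
      have h3 := vcount_k (k := m) hk
      rw [show (m-1)+m+1 = m + m from by omega, h1, h2] at hg
      have h5 : 2 * 2^(m-1) = 2^m := by
        rw [← pow_succ']
        congr 1
        omega
      omega
    · obtain ⟨m', rfl⟩ : ∃ m', m = m' + k + 1 := ⟨m - k - 1, by omega⟩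
      have hg := grec k (m' + k) hk
      have i1 := ih m' (by omega)
      have i2 := ih (m' + k) (by omega)
      have hv := vrec k m' hk
      rw [show m'+k+1+k = m'+k+k+1 from by omega]
      omega


lemma hasKOnes_update_false {k n : ℕ} {s : Fin n → Bool} {i : Fin n}
    (h : hasKOnes k (Function.update s i false)) : hasKOnes k s := by
  obtain ⟨a, ha, run⟩ := h
  refine ⟨a, ha, fun j hj => ?_⟩
  have hr := run j hj
  by_cases hij : (⟨a + j, by omega⟩ : Fin n) = i
  · rw [hij, Function.update_self] at hr
    exact absurd hr (by simp)
  · rwa [Function.update_of_ne hij] at hr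

lemma cube_adj_update {n : ℕ} (s : Fin n → Bool) (i : Fin n) (hi : s i = true) :
    (cube n).Adj s (Function.update s i false) := by
  refine ⟨i, ?_, ?_⟩
  · show s i ≠ Function.update s i false i
    rw [Function.update_self, hi]
    simp
  · intro j hj
    have hj' : s j ≠ Function.update s i false j := hj
    by_contra hne
    rw [Function.update_of_ne hne] at hj'
    exact hj' rfl

lemma eGamma_eq_bcount (k n : ℕ) (hk : 1 ≤ k) : eGamma k n = bcount k n := by
  set S : Set (Fin n → Bool) := {s : Fin n → Bool | ¬ hasKOnes k s} with hS
  have hmemS : ∀ s : Fin n → Bool, s ∈ S ↔ ¬ hasKOnes k s := fun s => Iff.rfl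
  set P := {p : (Fin n → Bool) × Fin n // ¬ hasKOnes k p.1 ∧ p.1 p.2 = true} with hP
  -- the bijection
  have hupd : ∀ p : P, ¬ hasKOnes k (Function.update p.1.1 p.1.2 false) :=
    fun p hc => p.2.1 (hasKOnes_update_false hc)
  let f : P → ((cube n).induce S).edgeSet := fun p =>
    ⟨s(⟨p.1.1, p.2.1⟩, ⟨Function.update p.1.1 p.1.2 false, hupd p⟩),
      (SimpleGraph.mem_edgeSet _).mpr (cube_adj_update p.1.1 p.1.2 p.2.2)⟩
  have hinj : Function.Injective f := by
    intro p q hpq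
    have h0 := Subtype.ext_iff.mp hpq
    simp only [f, Sym2.eq_iff] at h0
    rcases h0 with ⟨h1, h2⟩ | ⟨h1, h2⟩
    · have e1 : p.1.1 = q.1.1 := congrArg Subtype.val h1
      have e2 : Function.update p.1.1 p.1.2 false = Function.update q.1.1 q.1.2 false :=
        congrArg Subtype.val h2
      have e3 : p.1.2 = q.1.2 := by
        by_contra hne
        have := congrFun e2 p.1.2
        rw [Function.update_self, Function.update_of_ne hne, ← e1] at this
        rw [p.2.2] at this
        exact Bool.false_ne_true this
      apply Subtype.ext
      exact Prod.ext e1 e3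
    · exfalso
      have e1 : p.1.1 = Function.update q.1.1 q.1.2 false := congrArg Subtype.val h1
      have e2 : Function.update p.1.1 p.1.2 false = q.1.1 := congrArg Subtype.val h2
      have h3 := congrFun e1 p.1.2
      rw [p.2.2] at h3
      have h4 : p.1.2 ≠ q.1.2 := by
        intro hc
        rw [hc, Function.update_self] at h3
        exact Bool.false_ne_true h3.symm
      rw [Function.update_of_ne h4] at h3
      have h5 := congrFun e2 p.1.2
      rw [Function.update_self] at h5
      rw [← h5] at h3
      exact Bool.false_ne_true h3.symm
  have hsurj : Function.Surjective f := by
    rintro ⟨e, he⟩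
    revert he
    refine Sym2.ind (fun x y => ?_) e
    intro he
    obtain ⟨i, hxy0, huniq0⟩ := (SimpleGraph.mem_edgeSet _).mp he
    have hxy : x.1 i ≠ y.1 i := hxy0
    have huniq : ∀ j : Fin n, x.1 j ≠ y.1 j → j = i := fun j h => huniq0 j h
    have hsame : ∀ j, j ≠ i → x.1 j = y.1 j := by
      intro j hj
      by_contra hc
      exact hj (huniq j hc)
    cases hb : x.1 i with
    | true =>
      have hyi : y.1 i = false := by
        cases hy : y.1 i
        · rfl
        · rw [hb, hy] at hxy
          exact absurd rfl hxy
      have h2 : Function.update x.1 i false = y.1 := by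
        funext j
        by_cases hj : j = i
        · subst hj
          rw [Function.update_self, hyi]
        · rw [Function.update_of_ne hj]
          exact hsame j hj
      refine ⟨⟨(x.1, i), x.2, hb⟩, ?_⟩
      apply Subtype.ext
      show s(_, _) = s(x, y)
      exact Sym2.eq_iff.mpr (Or.inl ⟨Subtype.ext rfl, Subtype.ext h2⟩)
    | false =>
      have hyi : y.1 i = true := by
        cases hy : y.1 i
        · rw [hb, hy] at hxy
          exact absurd rfl hxy
        · rfl
      have h2 : Function.update y.1 i false = x.1 := by
        funext j
        by_cases hj : j = i
        · subst hj
          rw [Function.update_self, hb]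
        · rw [Function.update_of_ne hj]
          exact (hsame j hj).symm
      refine ⟨⟨(y.1, i), y.2, hyi⟩, ?_⟩
      apply Subtype.ext
      show s(_, _) = s(x, y)
      rw [Sym2.eq_swap]
      exact Sym2.eq_iff.mpr (Or.inl ⟨Subtype.ext h2, Subtype.ext rfl⟩)
  have hcard1 : eGamma k n = Nat.card P := by
    rw [eGamma]
    exact (Nat.card_eq_of_bijective f ⟨hinj, hsurj⟩).symm
  rw [hcard1, Nat.card_eq_fintype_card, Fintype.card_subtype]
  -- now count the finset
  rw [Finset.card_filter]
  rw [← Finset.univ_product_univ, Finset.sum_product]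
  have einner : ∀ s : Fin n → Bool,
      (∑ i : Fin n, if ¬ hasKOnes k s ∧ s i = true then 1 else 0)
        = if ¬ hasKOnes k s then ones s else 0 := by
    intro s
    by_cases h : hasKOnes k s
    · simp [h]
    · rw [if_pos h, ones]
      apply Finset.sum_congr rfl
      intro i _
      cases hi : s i
      · simp [h, hi]
      · simp [h, hi]
  rw [Finset.sum_congr rfl (fun s _ => einner s)]
  rw [Finset.sum_ite, Finset.sum_const, smul_eq_mul, mul_zero, add_zero]
  rw [bcount, vset]

lemma key (k : ℕ) (hk : 2 ≤ k) : ∀ j : ℕ,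
    ((k:ℤ)+1) * bcount k (j+1) - 2 * k * bcount k j
      = ((j:ℤ)+1+k) * genFib k (j+k) - k * ((j:ℤ)+2) * genFib k j := by
  intro j
  induction j using Nat.strong_induction_on with
  | _ j ih =>
    have hk1 : 1 ≤ k := by omega
    by_cases c1 : j + 1 < k
    · -- small case
      have hF1 : genFib k (j+k) = 2^j := genFib_shift_small k hk1 j (by omega)
      have hF0 : genFib k j = 0 := by
        rw [genFib_small k j (by omega), if_neg (by omega)]
      rw [hF1, hF0]
      match j with
      | 0 =>
        have hb1 : bcount k 1 = 1 * 2^0 := bcount_small' (by omega)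
        rw [bcount_zero, hb1]
        push_cast
        ring
      | i+1 =>
        have hb1 : bcount k (i+2) = (i+2) * 2^(i+1) := bcount_small' (by omega)
        have hb0 : bcount k (i+1) = (i+1) * 2^i := bcount_small' (by omega)
        rw [hb1, hb0]
        push_cast
        ring
    · by_cases c2 : j + 1 = k
      · -- j + 1 = k
        obtain ⟨i, rfl⟩ : ∃ i, k = i + 2 := ⟨k - 2, by omega⟩
        have hj : j = i + 1 := by omega
        subst hj
        have hF1 : genFib (i+2) (i+1+(i+2)) = 2^(i+1) :=
          genFib_shift_small (i+2) hk1 (i+1) (by omega)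
        have hF0 : genFib (i+2) (i+1) = 1 := by
          rw [genFib_small (i+2) (i+1) (by omega), if_pos (by omega)]
        have hb0 : bcount (i+2) (i+1) = (i+1) * 2^i := bcount_small' (by omega)
        have hb1 : bcount (i+2) (i+2) + (i+2) = (i+2) * 2^(i+1) := by
          have := bcount_k' (k := i+2) (by omega)
          simpa using this
        rw [show i+1+1 = i+2 from rfl, hF1, hF0, hb0]
        have hb1' : (bcount (i+2) (i+2) : ℤ) + (i+2) = (i+2) * 2^(i+1) := by
          exact_mod_cast congrArg (fun t : ℕ => (t : ℤ)) hb1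
        push_cast
        push_cast at hb1'
        linear_combination ((i:ℤ)+3) * hb1'
      · by_cases c3 : j = k
        · -- j = k, i.e. n = k+1
          obtain ⟨i, rfl⟩ : ∃ i, k = i + 2 := ⟨k - 2, by omega⟩
          subst c3
          have hrec := brec (i+2) 0 hk1
          rw [bcount_zero] at hrec
          have hv0 : vcount (i+2) 0 = 1 := by
            rw [vcount_small (by omega)]
            rfl
          rw [hv0] at hrec
          -- hrec : bcount k (0+k+1) + 0 + k*1 = vcount k (0+k) + 2 * bcount k k
          have hb1 : bcount (i+2) (i+2) + (i+2) = (i+2) * 2^(i+1) := by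
            have := bcount_k' (k := i+2) (by omega)
            simpa using this
          have hv := vcount_k (k := i+2) (by omega)
          have hFk : genFib (i+2) (i+2+(i+2)) = vcount (i+2) (i+2) :=
            genFib_eq_vcount (i+2) hk1 (i+2)
          have hF0 : genFib (i+2) (i+2) = 1 := by
            have h01 := genFib_eq_vcount (i+2) hk1 0
            have h02 : vcount (i+2) 0 = 1 := by rw [vcount_small (by omega)]; rfl
            simpa [h02] using h01
          rw [hFk, hF0]
          rw [show (0:ℕ)+(i+2)+1 = i+3 from by omega, show (0:ℕ)+(i+2) = i+2 from by omega] at hrec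
          have hrec2 : bcount (i+2) (i+3) + (i+2)
              = vcount (i+2) (i+2) + 2 * bcount (i+2) (i+2) := by omega
          have hrec' : (bcount (i+2) (i+3) : ℤ) + (i+2)
              = vcount (i+2) (i+2) + 2 * bcount (i+2) (i+2) := by
            exact_mod_cast congrArg (fun t : ℕ => (t : ℤ)) hrec2
          have hb1' : (bcount (i+2) (i+2) : ℤ) + (i+2) = (i+2) * 2^(i+1) := by
            exact_mod_cast congrArg (fun t : ℕ => (t : ℤ)) hb1
          have hv' : (vcount (i+2) (i+2) : ℤ) + 1 = 2^(i+2) := by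
            exact_mod_cast congrArg (fun t : ℕ => (t : ℤ)) hv
          rw [show (i:ℕ)+2+1 = i+3 from rfl]
          push_cast
          push_cast at hrec' hb1' hv'
          linear_combination ((i:ℤ)+3) * hrec' + 2 * hb1' - ((i:ℤ)+2) * hv'
        · -- step case : j ≥ k + 1
          obtain ⟨m, rfl⟩ : ∃ m, j = m + k + 1 := ⟨j - k - 1, by omega⟩
          have ih1 := ih (m+k) (by omega)
          have ih2 := ih m (by omega)
          have h1 := brec k (m+1) hk1
          have h2 := brec k m hk1
          have h5 := grec k (m+k) hk1
          have h6 := grec k m hk1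
          -- bridge rewrites
          have bv1 : vcount k (m+1) = genFib k (m+k+1) := by
            have h := genFib_eq_vcount k hk1 (m+1)
            rw [show m+1+k = m+k+1 from by omega] at h
            exact h.symm
          have bv2 : vcount k (m+1+k) = genFib k (m+k+k+1) := by
            have h := genFib_eq_vcount k hk1 (m+1+k)
            rw [show m+1+k+k = m+k+k+1 from by omega] at h
            exact h.symm
          have bv3 : vcount k m = genFib k (m+k) := (genFib_eq_vcount k hk1 m).symm
          have bv4 : vcount k (m+k) = genFib k (m+k+k) :=
            (genFib_eq_vcount k hk1 (m+k)).symm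
          rw [bv1, bv2, show m+1+k+1 = m+k+2 from by omega, show m+1+k = m+k+1 from by omega] at h1
          rw [bv3, bv4] at h2
          -- cast everything to ℤ
          have h1' : (bcount k (m+k+2) : ℤ) + bcount k (m+1) + k * genFib k (m+k+1)
              = genFib k (m+k+k+1) + 2 * bcount k (m+k+1) := by
            exact_mod_cast congrArg (fun t : ℕ => (t : ℤ)) h1
          have h2' : (bcount k (m+k+1) : ℤ) + bcount k m + k * genFib k (m+k)
              = genFib k (m+k+k) + 2 * bcount k (m+k) := by
            exact_mod_cast congrArg (fun t : ℕ => (t : ℤ)) h2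
          have h5' : (genFib k (m+k+k+1) : ℤ) + genFib k (m+k) = 2 * genFib k (m+k+k) := by
            exact_mod_cast congrArg (fun t : ℕ => (t : ℤ)) h5
          have h6' : (genFib k (m+k+1) : ℤ) + genFib k m = 2 * genFib k (m+k) := by
            exact_mod_cast congrArg (fun t : ℕ => (t : ℤ)) h6
          rw [show m+k+1+1 = m+k+2 from rfl, show m+k+1+k = m+k+k+1 from by omega]
          push_cast
          push_cast at ih1 ih2
          linear_combination ((k:ℤ)+1) * h1' - 2*(k:ℤ) * h2' + 2 * ih1 - ih2
            - ((m:ℤ)+k+1) * h5' + (k:ℤ)*((m:ℤ)+2) * h6'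

end Fibcube

/-- Lemma 3.4: for `k ≥ 2` and `n ≥ 1`, as an identity of integers,
`(k+1)·e^(k)_n - 2k·e^(k)_{n-1} = (n+k)·F^(k)_{n+k-1} - k·(n+1)·F^(k)_{n-1}`. -/
theorem eGamma_two_term (k n : ℕ) (hk : 2 ≤ k) (hn : 1 ≤ n) :
    ((k : ℤ) + 1) * eGamma k n - 2 * k * eGamma k (n - 1) =
      ((n : ℤ) + k) * genFib k (n + k - 1) - k * ((n : ℤ) + 1) * genFib k (n - 1) := by
  obtain ⟨j, rfl⟩ : ∃ j, n = j + 1 := ⟨n - 1, by omega⟩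
  have hk1 : 1 ≤ k := by omega
  rw [eGamma_eq_bcount k (j+1) hk1, eGamma_eq_bcount k (j+1-1) hk1]
  have hkey := key k hk j
  rw [show j+1-1 = j from rfl, show j+1+k-1 = j+k from by omega]
  push_cast at hkey ⊢
  linear_combination hkey
end

section
/- For all integers p ≥ 1 and n ≥ p+1, the number of edges of the Fibonacci p-cube satisfies |E(Γ^p_n)| = |E(Γ^p_{n−1})| + |E(Γ^p_{n−p−1})| + F^p_n. -/
/-- The Fibonacci `p`-numbers: `F^p_0 = 0`, `F^p_1 = ⋯ = F^p_p = 1`, and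
`F^p_n = F^p_{n-1} + F^p_{n-p-1}` for `n > p`. -/
def pFib (p : ℕ) : ℕ → ℕ
  | 0 => 0
  | n + 1 => if n + 1 ≤ p then 1 else pFib p n + pFib p (n - p)
termination_by n => n
decreasing_by all_goals omega

/-- A Fibonacci `p`-string: a binary string in which any two 1s are separated by
at least `p` 0s, i.e. two positions carrying a 1 differ by more than `p`. -/
def isPString (p : ℕ) {n : ℕ} (s : Fin n → Bool) : Prop :=
  ∀ i j : Fin n, (i : ℕ) < (j : ℕ) → s i = true → s j = true → (i : ℕ) + p < (j : ℕ)

/-- The number of edges of the Fibonacci `p`-cube `Γ^p_n`, the subgraph of `Q_n`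
induced by all Fibonacci `p`-strings of length `n`. -/
noncomputable def ePCube (p n : ℕ) : ℕ :=
  Nat.card ((cube n).induce {s : Fin n → Bool | isPString p s}).edgeSet

namespace PCubeAux

/-- Extend `s` by `l` zeros and then one bit `b`. -/
def pad {k : ℕ} (l : ℕ) (b : Bool) (s : Fin k → Bool) : Fin (k + l + 1) → Bool :=
  fun i => if h : (i : ℕ) < k then s ⟨i, h⟩ else if (i : ℕ) = k + l then b else false

lemma pad_lt {k l : ℕ} {b : Bool} {s : Fin k → Bool} (i : Fin (k + l + 1)) (h : (i : ℕ) < k) :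
    pad l b s i = s ⟨i, h⟩ := dif_pos h

lemma pad_ge {k l : ℕ} {b : Bool} {s : Fin k → Bool} (i : Fin (k + l + 1)) (h : ¬ (i : ℕ) < k) :
    pad l b s i = if (i : ℕ) = k + l then b else false := dif_neg h

lemma pad_last {k l : ℕ} {b : Bool} {s : Fin k → Bool} :
    pad l b s ⟨k + l, by omega⟩ = b := by
  rw [pad_ge _ (by simp), if_pos rfl]

lemma pad_injective {k l : ℕ} {b : Bool} : Function.Injective (pad (k := k) l b) := by
  intro s t h
  funext i
  have h2 := congrFun h ⟨(i : ℕ), by omega⟩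
  rw [pad_lt _ (by simpa using i.isLt), pad_lt _ (by simpa using i.isLt)] at h2
  simpa using h2

lemma adj_pad {k l : ℕ} {b : Bool} {s t : Fin k → Bool} :
    (cube (k + l + 1)).Adj (pad l b s) (pad l b t) ↔ (cube k).Adj s t := by
  constructor
  · rintro ⟨i, hi, hu⟩
    have hik : (i : ℕ) < k := by
      by_contra h
      exact hi (by rw [pad_ge _ h, pad_ge _ h])
    refine ⟨⟨i, hik⟩, ?_, ?_⟩
    · intro he
      apply hi
      rw [pad_lt _ hik, pad_lt _ hik]
      simpa using he
    · intro j hj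
      have h3 : (⟨(j : ℕ), by omega⟩ : Fin (k + l + 1)) = i := by
        apply hu
        rw [pad_lt _ (by simpa using j.isLt), pad_lt _ (by simpa using j.isLt)]
        simpa using hj
      apply Fin.ext
      simpa using congrArg Fin.val h3
  · rintro ⟨i, hi, hu⟩
    refine ⟨⟨(i : ℕ), by omega⟩, ?_, ?_⟩
    · beta_reduce
      rw [pad_lt _ (by simpa using i.isLt), pad_lt _ (by simpa using i.isLt)]
      simpa using hi
    · intro j hj
      have hjk : (j : ℕ) < k := by
        by_contra h
        exact hj (by rw [pad_ge _ h, pad_ge _ h])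
      rw [pad_lt _ hjk, pad_lt _ hjk] at hj
      have := hu ⟨(j : ℕ), hjk⟩ hj
      apply Fin.ext
      simpa using congrArg Fin.val this

lemma adj_cross {k l : ℕ} {t : Fin k → Bool} :
    (cube (k + l + 1)).Adj (pad l false t) (pad l true t) := by
  refine ⟨⟨k + l, by omega⟩, ?_, ?_⟩
  · beta_reduce
    rw [pad_last, pad_last]; simp
  · intro j hj
    by_cases h : (j : ℕ) < k
    · rw [pad_lt _ h, pad_lt _ h] at hj
      exact absurd rfl hj
    · rw [pad_ge _ h, pad_ge _ h] at hj
      by_cases h2 : (j : ℕ) = k + l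
      · exact Fin.ext h2
      · simp [h2] at hj

lemma isPString_res {p k l : ℕ} (x : Fin (k + l + 1) → Bool) (hx : isPString p x) :
    isPString p (fun i : Fin k => x ⟨(i : ℕ), by omega⟩) :=
  fun i j hij h1 h2 => hx ⟨(i : ℕ), by omega⟩ ⟨(j : ℕ), by omega⟩ hij h1 h2

lemma isPString_pad_false {p k l : ℕ} {s : Fin k → Bool} :
    isPString p (pad l false s) ↔ isPString p s := by
  constructor
  · intro h i j hij h1 h2
    exact h ⟨(i : ℕ), by omega⟩ ⟨(j : ℕ), by omega⟩ hij
      (by rwa [pad_lt _ (by simpa using i.isLt), Fin.eta])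
      (by rwa [pad_lt _ (by simpa using j.isLt), Fin.eta])
  · intro h i j hij h1 h2
    have hik : (i : ℕ) < k := by
      by_contra hc
      rw [pad_ge _ hc] at h1
      by_cases h2 : (i : ℕ) = k + l <;> simp [h2] at h1
    have hjk : (j : ℕ) < k := by
      by_contra hc
      rw [pad_ge _ hc] at h2
      by_cases h3 : (j : ℕ) = k + l <;> simp [h3] at h2
    rw [pad_lt _ hik] at h1
    rw [pad_lt _ hjk] at h2
    exact h ⟨(i : ℕ), hik⟩ ⟨(j : ℕ), hjk⟩ hij h1 h2

lemma isPString_pad_true {p k : ℕ} {s : Fin k → Bool} :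
    isPString p (pad p true s) ↔ isPString p s := by
  constructor
  · intro h i j hij h1 h2
    exact h ⟨(i : ℕ), by omega⟩ ⟨(j : ℕ), by omega⟩ hij
      (by rwa [pad_lt _ (by simpa using i.isLt), Fin.eta])
      (by rwa [pad_lt _ (by simpa using j.isLt), Fin.eta])
  · intro h i j hij h1 h2
    by_cases hik : (i : ℕ) < k
    · rw [pad_lt _ hik] at h1
      by_cases hjk : (j : ℕ) < k
      · rw [pad_lt _ hjk] at h2
        exact h ⟨(i : ℕ), hik⟩ ⟨(j : ℕ), hjk⟩ hij h1 h2
      · rw [pad_ge _ hjk] at h2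
        by_cases h3 : (j : ℕ) = k + p
        · omega
        · simp [h3] at h2
    · rw [pad_ge _ hik] at h1
      by_cases h3 : (i : ℕ) = k + p
      · have : (j : ℕ) < k + p + 1 := j.isLt
        omega
      · simp [h3] at h1

lemma eq_pad {k l : ℕ} {b : Bool} (x : Fin (k + l + 1) → Bool)
    (hx : ∀ i : Fin (k + l + 1), k ≤ (i : ℕ) → x i = if (i : ℕ) = k + l then b else false) :
    x = pad l b (fun i : Fin k => x ⟨(i : ℕ), by omega⟩) := by
  funext i
  by_cases h : (i : ℕ) < k
  · rw [pad_lt _ h]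
  · rw [pad_ge _ h, ← hx i (by omega)]

lemma zeros_of_last_true {p k : ℕ} (x : Fin (k + p + 1) → Bool) (hx : isPString p x)
    (hl : x ⟨k + p, by omega⟩ = true) :
    ∀ i : Fin (k + p + 1), k ≤ (i : ℕ) → x i = if (i : ℕ) = k + p then true else false := by
  intro i hi
  by_cases h : (i : ℕ) = k + p
  · rw [if_pos h]
    have : i = ⟨k + p, by omega⟩ := Fin.ext h
    rw [this]; exact hl
  · rw [if_neg h]
    by_contra hc
    have hi2 : x i = true := by
      cases hxi : x i
      · exact absurd hxi hc
      · rfl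
    have := hx i ⟨k + p, by omega⟩ (by simp; omega) hi2 hl
    simp at this
    omega


/-- the vertex subtype -/
abbrev PS (p k : ℕ) : Type := {s : Fin k → Bool // isPString p s}

def vF {p k l : ℕ} (s : PS p k) : PS p (k + l + 1) :=
  ⟨pad l false s.1, isPString_pad_false.mpr s.2⟩

def vT {p k : ℕ} (s : PS p k) : PS p (k + p + 1) :=
  ⟨pad p true s.1, isPString_pad_true.mpr s.2⟩

lemma vF_injective {p k l : ℕ} : Function.Injective (vF (p := p) (k := k) (l := l)) :=
  fun a b h => Subtype.ext (pad_injective (congrArg Subtype.val h))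

lemma vT_injective {p k : ℕ} : Function.Injective (vT (p := p) (k := k)) :=
  fun a b h => Subtype.ext (pad_injective (congrArg Subtype.val h))

lemma vF_last {p k l : ℕ} (s : PS p k) : (vF (l := l) s).1 ⟨k + l, by omega⟩ = false := pad_last

lemma vT_last {p k : ℕ} (s : PS p k) : (vT s).1 ⟨k + p, by omega⟩ = true := pad_last

lemma vF_ne_vT {p k : ℕ} (s : PS p (k + p)) (t : PS p k) :
    (vF (l := 0) s : PS p (k + p + 1)) ≠ vT t := by
  intro h
  have h1 : (vT t).1 ⟨k + p, by omega⟩ = false := by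
    rw [← h]; exact pad_last (k := k + p) (l := 0)
  rw [vT_last] at h1
  simp at h1

def vres {p k : ℕ} (l : ℕ) (x : PS p (k + l + 1)) : PS p k :=
  ⟨fun i => x.1 ⟨(i : ℕ), by omega⟩, isPString_res x.1 x.2⟩

lemma eq_vF {p k : ℕ} (x : PS p (k + p + 1)) (hx : x.1 ⟨k + p, by omega⟩ = false) :
    x = vF (l := 0) (vres (k := k + p) 0 x) := by
  apply Subtype.ext
  apply eq_pad (k := k + p) (l := 0)
  intro i hi
  have h2 : x.1 i = false := by
    have h3 : i = ⟨k + p, by omega⟩ := Fin.ext (by simp only [Fin.val_mk]; have := i.isLt; omega)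
    rw [h3]; exact hx
  rw [h2]
  simp

lemma eq_vT {p k : ℕ} (x : PS p (k + p + 1)) (hx : x.1 ⟨k + p, by omega⟩ = true) :
    x = vT (vres (k := k) p x) :=
  Subtype.ext (eq_pad x.1 (zeros_of_last_true x.1 x.2 hx))

lemma card_PS_rec (p k : ℕ) :
    Nat.card (PS p (k + p + 1)) = Nat.card (PS p (k + p)) + Nat.card (PS p k) := by
  have hf : Function.Bijective
      (Sum.elim (vF (l := 0)) vT : PS p (k + p) ⊕ PS p k → PS p (k + p + 1)) := by
    constructor
    · rintro (a | a) (b | b) h <;> simp only [Sum.elim_inl, Sum.elim_inr] at h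
      · rw [vF_injective h]
      · exact absurd h (vF_ne_vT a b)
      · exact absurd h.symm (vF_ne_vT b a)
      · rw [vT_injective h]
    · intro x
      cases hx : x.1 ⟨k + p, by omega⟩
      · exact ⟨Sum.inl _, (eq_vF x hx).symm⟩
      · exact ⟨Sum.inr _, (eq_vT x hx).symm⟩
  rw [← Nat.card_congr (Equiv.ofBijective _ hf), Nat.card_sum]

lemma card_PS_of_le {p k : ℕ} (hk : k ≤ p) : Nat.card (PS p k) = k + 1 := by
  classical
  have hf : Function.Bijective (fun o : Option (Fin k) => (Option.elim o
      (⟨fun _ => false, by intro i j _ h1 _; simp at h1⟩ : PS p k)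
      (fun i => (⟨fun j => decide (j = i), by
        intro a b hab h1 h2
        simp only [decide_eq_true_eq] at h1 h2
        subst h1; subst h2
        exact absurd hab (lt_irrefl _)⟩ : PS p k))) : Option (Fin k) → PS p k) := by
    constructor
    · rintro (_ | i) (_ | j) h <;> simp only [Option.elim] at h
      · rfl
      · have := congrFun (congrArg Subtype.val h) j
        simp at this
      · have := congrFun (congrArg Subtype.val h) i
        simp at this
      · have h2 := congrFun (congrArg Subtype.val h) i
        by_cases hij : i = j
        · rw [hij]
        · simp [hij] at h2
    · rintro ⟨t, ht⟩
      by_cases he : ∃ i, t i = true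
      · obtain ⟨i, hi⟩ := he
        refine ⟨some i, ?_⟩
        apply Subtype.ext
        funext j
        simp only [Option.elim]
        by_cases hji : j = i
        · subst hji; simp [hi]
        · have hjf : t j = false := by
            by_contra hc
            have hj : t j = true := by
              cases h : t j
              · exact absurd h hc
              · rfl
            rcases Nat.lt_trichotomy (j : ℕ) (i : ℕ) with h | h | h
            · have := ht j i h hj hi
              have := i.isLt; omega
            · exact hji (Fin.ext h)
            · have := ht i j h hi hj
              have := j.isLt; omega
          simp [hji, hjf]
      · push_neg at he
        refine ⟨none, ?_⟩
        apply Subtype.ext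
        funext j
        simp only [Option.elim]
        cases h : t j
        · rfl
        · exact absurd h (he j)
  rw [← Nat.card_congr (Equiv.ofBijective _ hf), Nat.card_eq_fintype_card]
  simp

lemma pFib_rec (p k : ℕ) : pFib p (k + p + 1) = pFib p (k + p) + pFib p k := by
  rw [pFib, if_neg (by omega), Nat.add_sub_cancel]

lemma pFib_one_le {p k : ℕ} (h1 : 1 ≤ k) (h2 : k ≤ p) : pFib p k = 1 := by
  obtain ⟨j, rfl⟩ : ∃ j, k = j + 1 := ⟨k - 1, by omega⟩
  rw [pFib, if_pos h2]

lemma pFib_base {p : ℕ} (hp : 1 ≤ p) : ∀ k, k ≤ p → pFib p (k + p + 1) = k + 1 := by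
  intro k
  induction k with
  | zero =>
    intro _
    rw [pFib_rec, Nat.zero_add, pFib_one_le hp le_rfl]
    simp [pFib]
  | succ k ih =>
    intro h
    rw [pFib_rec, show k + 1 + p = k + p + 1 from by omega, ih (by omega),
      pFib_one_le (by omega) h]

lemma card_PS_eq_pFib {p : ℕ} (hp : 1 ≤ p) : ∀ k, Nat.card (PS p k) = pFib p (k + p + 1) := by
  intro k
  induction k using Nat.strong_induction_on with
  | _ k ih =>
    by_cases hk : k ≤ p
    · rw [card_PS_of_le hk, pFib_base hp k hk]
    · obtain ⟨j, rfl⟩ : ∃ j, k = j + p + 1 := ⟨k - p - 1, by omega⟩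
      rw [card_PS_rec, ih (j + p) (by omega), ih j (by omega),
        pFib_rec p (j + p + 1), show j + p + 1 + p = j + p + p + 1 from by omega]

abbrev Gam (p k : ℕ) : SimpleGraph {s : Fin k → Bool | isPString p s} :=
  (cube k).induce {s : Fin k → Bool | isPString p s}

def vC {p k : ℕ} (t : PS p k) : PS p (k + p + 1) :=
  ⟨pad p false t.1, isPString_pad_false.mpr t.2⟩

lemma vC_last {p k : ℕ} (t : PS p k) : (vC t).1 ⟨k + p, by omega⟩ = false := pad_last

lemma vC_injective {p k : ℕ} : Function.Injective (vC (p := p) (k := k)) :=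
  fun a b h => Subtype.ext (pad_injective (congrArg Subtype.val h))

lemma gam_adj {p k : ℕ} {a b : PS p k} : (Gam p k).Adj a b ↔ (cube k).Adj a.1 b.1 :=
  Iff.rfl

lemma mapVF_mem {p k : ℕ} {e : Sym2 (PS p (k + p))} (he : e ∈ (Gam p (k + p)).edgeSet) :
    Sym2.map (vF (l := 0)) e ∈ (Gam p (k + p + 1)).edgeSet := by
  induction e using Sym2.inductionOn with
  | hf a b =>
    rw [Sym2.map_pair_eq, SimpleGraph.mem_edgeSet] at *
    exact (adj_pad (l := 0) (b := false)).mpr he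

lemma mapVT_mem {p k : ℕ} {e : Sym2 (PS p k)} (he : e ∈ (Gam p k).edgeSet) :
    Sym2.map vT e ∈ (Gam p (k + p + 1)).edgeSet := by
  induction e using Sym2.inductionOn with
  | hf a b =>
    rw [Sym2.map_pair_eq, SimpleGraph.mem_edgeSet] at *
    exact (adj_pad (l := p) (b := true)).mpr he

lemma cross_mem {p k : ℕ} (t : PS p k) :
    s(vC t, vT t) ∈ (Gam p (k + p + 1)).edgeSet :=
  adj_cross

def eF {p k : ℕ} (e : ↥(Gam p (k + p)).edgeSet) : ↥(Gam p (k + p + 1)).edgeSet :=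
  ⟨Sym2.map (vF (l := 0)) e.1, mapVF_mem e.2⟩

def eT {p k : ℕ} (e : ↥(Gam p k).edgeSet) : ↥(Gam p (k + p + 1)).edgeSet :=
  ⟨Sym2.map vT e.1, mapVT_mem e.2⟩

def eC {p k : ℕ} (t : PS p k) : ↥(Gam p (k + p + 1)).edgeSet :=
  ⟨s(vC t, vT t), cross_mem t⟩

lemma last_of_mem_mapVF {p k : ℕ} {e : Sym2 (PS p (k + p))} {x : PS p (k + p + 1)}
    (hx : x ∈ Sym2.map (vF (l := 0)) e) : x.1 ⟨k + p, by omega⟩ = false := by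
  rw [Sym2.mem_map] at hx
  obtain ⟨a, -, rfl⟩ := hx
  exact pad_last (k := k + p) (l := 0)

lemma last_of_mem_mapVT {p k : ℕ} {e : Sym2 (PS p k)} {x : PS p (k + p + 1)}
    (hx : x ∈ Sym2.map vT e) : x.1 ⟨k + p, by omega⟩ = true := by
  rw [Sym2.mem_map] at hx
  obtain ⟨a, -, rfl⟩ := hx
  exact pad_last

lemma mapVF_ne_mapVT {p k : ℕ} (e1 : Sym2 (PS p (k + p))) (e2 : Sym2 (PS p k)) :
    Sym2.map (vF (l := 0)) e1 ≠ Sym2.map vT e2 := by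
  induction e2 using Sym2.inductionOn with
  | hf x y =>
    intro h
    have hm : vT x ∈ Sym2.map (vF (l := 0)) e1 := by
      rw [h, Sym2.map_pair_eq]; exact Sym2.mem_mk_left _ _
    have h1 := last_of_mem_mapVF hm
    rw [vT_last] at h1
    simp at h1

lemma mapVF_ne_cross {p k : ℕ} (e1 : Sym2 (PS p (k + p))) (t : PS p k) :
    Sym2.map (vF (l := 0)) e1 ≠ s(vC t, vT t) := by
  intro h
  have hm : vT t ∈ Sym2.map (vF (l := 0)) e1 := by rw [h]; exact Sym2.mem_mk_right _ _
  have h1 := last_of_mem_mapVF hm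
  rw [vT_last] at h1
  simp at h1

lemma mapVT_ne_cross {p k : ℕ} (e1 : Sym2 (PS p k)) (t : PS p k) :
    Sym2.map vT e1 ≠ s(vC t, vT t) := by
  intro h
  have hm : vC t ∈ Sym2.map vT e1 := by rw [h]; exact Sym2.mem_mk_left _ _
  have h1 := last_of_mem_mapVT hm
  rw [vC_last] at h1
  simp at h1

lemma cross_inj {p k : ℕ} {t t' : PS p k} (h : s(vC t, vT t) = s(vC t', vT t')) : t = t' := by
  rw [Sym2.eq_iff] at h
  rcases h with ⟨h1, -⟩ | ⟨h1, -⟩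
  · exact vC_injective h1
  · exfalso
    have h2 := vC_last t
    rw [h1, vT_last] at h2
    simp at h2

lemma cross_decomp {p k : ℕ} (a b : PS p (k + p + 1))
    (hadj : (cube (k + p + 1)).Adj a.1 b.1)
    (ha : a.1 ⟨k + p, by omega⟩ = false) (hb : b.1 ⟨k + p, by omega⟩ = true) :
    a = vC (vres p b) ∧ b = vT (vres p b) := by
  have hbeq : b = vT (vres p b) := eq_vT b hb
  obtain ⟨i0, hi0, hu⟩ := hadj
  have hlast : (⟨k + p, by omega⟩ : Fin (k + p + 1)) = i0 := by
    apply hu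
    show a.1 _ ≠ b.1 _
    rw [ha, hb]
    simp
  have hagree : ∀ j : Fin (k + p + 1), (j : ℕ) < k + p → a.1 j = b.1 j := by
    intro j hj
    by_contra hne
    have h2 := hu j hne
    rw [← hlast] at h2
    have h3 := congrArg Fin.val h2
    simp at h3
    omega
  refine ⟨?_, hbeq⟩
  apply Subtype.ext
  funext i
  show a.1 i = pad p false (vres p b).1 i
  by_cases h : (i : ℕ) < k
  · rw [pad_lt _ h]
    show a.1 i = b.1 ⟨(i : ℕ), by omega⟩
    rw [hagree i (by omega)]
  · rw [pad_ge _ h]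
    by_cases h2 : (i : ℕ) = k + p
    · rw [if_pos h2]
      have h3 : i = ⟨k + p, by omega⟩ := Fin.ext h2
      rw [h3, ha]
    · rw [if_neg h2]
      have hbi : b.1 i = false := by
        have h4 := zeros_of_last_true b.1 b.2 hb i (by omega)
        rwa [if_neg h2] at h4
      rw [hagree i (by have := i.isLt; omega), hbi]

lemma card_edge_rec (p k : ℕ) :
    Nat.card (Gam p (k + p + 1)).edgeSet =
      Nat.card (Gam p (k + p)).edgeSet + Nat.card (Gam p k).edgeSet + Nat.card (PS p k) := by
  have hf : Function.Bijective (Sum.elim eF (Sum.elim eT eC) :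
      ↥(Gam p (k + p)).edgeSet ⊕ (↥(Gam p k).edgeSet ⊕ PS p k) →
        ↥(Gam p (k + p + 1)).edgeSet) := by
    constructor
    · rintro (a | a | a) (b | b | b) h <;>
        simp only [Sum.elim_inl, Sum.elim_inr] at h <;>
        have h1 := congrArg Subtype.val h
      · have h2 := Sym2.map.injective (vF_injective (p := p) (k := k + p) (l := 0)) h1
        rw [Subtype.ext h2]
      · exact absurd h1 (mapVF_ne_mapVT _ _)
      · exact absurd h1 (mapVF_ne_cross _ _)
      · exact absurd h1.symm (mapVF_ne_mapVT _ _)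
      · have h2 := Sym2.map.injective (vT_injective (p := p) (k := k)) h1
        rw [Subtype.ext h2]
      · exact absurd h1 (mapVT_ne_cross _ _)
      · exact absurd h1.symm (mapVF_ne_cross _ _)
      · exact absurd h1.symm (mapVT_ne_cross _ _)
      · rw [cross_inj h1]
    · rintro ⟨e, he⟩
      induction e using Sym2.inductionOn with
      | hf a b =>
        have hadj : (cube (k + p + 1)).Adj a.1 b.1 := he
        cases ha : a.1 ⟨k + p, by omega⟩ <;> cases hb : b.1 ⟨k + p, by omega⟩
        · -- both false
          refine ⟨Sum.inl ⟨s(vres 0 a, vres 0 b), ?_⟩, ?_⟩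
          · rw [SimpleGraph.mem_edgeSet, gam_adj]
            have h3 := hadj
            rw [congrArg Subtype.val (eq_vF a ha), congrArg Subtype.val (eq_vF b hb)] at h3
            exact (adj_pad (l := 0) (b := false)).mp h3
          · simp only [Sum.elim_inl]
            apply Subtype.ext
            show Sym2.map (vF (l := 0)) s(vres 0 a, vres 0 b) = s(a, b)
            rw [Sym2.map_pair_eq, ← eq_vF a ha, ← eq_vF b hb]
            rfl
        · -- a false, b true : cross
          obtain ⟨h1, h2⟩ := cross_decomp a b hadj ha hb
          refine ⟨Sum.inr (Sum.inr (vres p b)), ?_⟩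
          simp only [Sum.elim_inr]
          apply Subtype.ext
          show s(vC (vres p b), vT (vres p b)) = s(a, b)
          rw [← h1, ← h2]
          rfl
        · -- a true, b false : cross swapped
          obtain ⟨h1, h2⟩ := cross_decomp b a hadj.symm hb ha
          refine ⟨Sum.inr (Sum.inr (vres p a)), ?_⟩
          simp only [Sum.elim_inr]
          apply Subtype.ext
          show s(vC (vres p a), vT (vres p a)) = s(a, b)
          rw [← h1, ← h2, Sym2.eq_swap]
          rfl
        · -- both true
          refine ⟨Sum.inr (Sum.inl ⟨s(vres p a, vres p b), ?_⟩), ?_⟩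
          · rw [SimpleGraph.mem_edgeSet, gam_adj]
            have h3 := hadj
            rw [congrArg Subtype.val (eq_vT a ha), congrArg Subtype.val (eq_vT b hb)] at h3
            exact (adj_pad (l := p) (b := true)).mp h3
          · simp only [Sum.elim_inr, Sum.elim_inl]
            apply Subtype.ext
            show Sym2.map vT s(vres p a, vres p b) = s(a, b)
            rw [Sym2.map_pair_eq, ← eq_vT a ha, ← eq_vT b hb]
            rfl
  rw [← Nat.card_congr (Equiv.ofBijective _ hf), Nat.card_sum, Nat.card_sum]
  omega

end PCubeAux

/-- Theorem 4.1(i): for `p ≥ 1` and `n ≥ p+1`,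
`|E(Γ^p_n)| = |E(Γ^p_{n-1})| + |E(Γ^p_{n-p-1})| + F^p_n`. -/
theorem ePCube_recurrence (p n : ℕ) (hp : 1 ≤ p) (hn : p + 1 ≤ n) :
    ePCube p n = ePCube p (n - 1) + ePCube p (n - p - 1) + pFib p n := by
  obtain ⟨m, rfl⟩ : ∃ m, n = m + p + 1 := ⟨n - p - 1, by omega⟩
  rw [show m + p + 1 - 1 = m + p from by omega, show m + p + 1 - p - 1 = m from by omega]
  unfold ePCube
  rw [PCubeAux.card_edge_rec, PCubeAux.card_PS_eq_pFib hp m]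
end

section
/- For all integers p ≥ 1 and n ≥ p+1, the number of edges of the Fibonacci p-cube satisfies, as an identity of integers, (p^p + (p+1)^{p+1})·|E(Γ^p_n)| = p^p·n·F^p_n + ∑_{t=0}^{p} p^t·(p+1)^{p−t}·(n+p−t)·F^p_{n−t}. -/
namespace PC


variable {p : ℕ}

lemma pFib_zero (p : ℕ) : pFib p 0 = 0 := by simp [pFib]

lemma pFib_succ (p m : ℕ) :
    pFib p (m+1) = if m + 1 ≤ p then 1 else pFib p m + pFib p (m - p) := by
  rw [pFib]

lemma pFib_one (hp : 1 ≤ p) {k : ℕ} (h1 : 1 ≤ k) (h2 : k ≤ p + 1) : pFib p k = 1 := by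
  have hpp : pFib p p = 1 := by
    obtain ⟨q, hq⟩ : ∃ q, p = q + 1 := ⟨p-1, by omega⟩
    rw [hq, pFib_succ, if_pos (by omega)]
  rcases le_or_gt k p with h | h
  · obtain ⟨q, hq⟩ : ∃ q, k = q + 1 := ⟨k-1, by omega⟩
    rw [hq, pFib_succ, if_pos (by omega)]
  · have hk : k = p + 1 := by omega
    subst hk
    rw [pFib_succ, if_neg (by omega), show p - p = 0 by omega, pFib_zero, hpp]

lemma pFib_rec {k : ℕ} (h : p + 1 ≤ k) :
    pFib p k = pFib p (k-1) + pFib p (k-1-p) := by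
  obtain ⟨m, rfl⟩ := Nat.exists_eq_add_of_le h
  rw [show p + 1 + m - 1 - p = m by omega, show p + 1 + m - 1 = p + m by omega,
    show p + 1 + m = (p + m) + 1 by omega, pFib_succ, if_neg (by omega),
    show p + m - p = m by omega]

lemma pFib_rec2 (hp : 1 ≤ p) {k : ℕ} (h : 2 ≤ k) :
    pFib p k = pFib p (k-1) + pFib p (k-1-p) := by
  rcases le_or_gt (p+1) k with hk | hk
  · exact pFib_rec hk
  · have e0 : k - 1 - p = 0 := by omega
    rw [e0, pFib_zero, pFib_one hp (by omega) (by omega), pFib_one hp (by omega) (by omega)]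

/-- The convolution sum `S n = ∑_{i<n} F_{i+1} F_{n-i}`. -/
def S (p n : ℕ) : ℕ := ∑ i ∈ Finset.range n, pFib p (i+1) * pFib p (n-i)

lemma S_small (hp : 1 ≤ p) {n : ℕ} (hn : n ≤ p + 1) : S p n = n := by
  unfold S
  have h1 : ∀ i ∈ Finset.range n, pFib p (i+1) * pFib p (n-i) = 1 := fun i hi => by
    rw [Finset.mem_range] at hi
    rw [pFib_one hp (by omega) (by omega), pFib_one hp (by omega) (by omega), mul_one]
  rw [Finset.sum_congr rfl h1, Finset.sum_const, Finset.card_range, smul_eq_mul, mul_one]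

lemma S_rec (hp : 1 ≤ p) (m : ℕ) :
    S p (m+p+1) = S p (m+p) + S p m + pFib p (m+p+1) := by
  unfold S
  rw [Finset.sum_range_succ]
  have hlast : pFib p (m+p+1-(m+p)) = 1 := by
    rw [show m+p+1-(m+p) = 1 by omega]; exact pFib_one hp le_rfl (by omega)
  rw [hlast, mul_one]
  have key : ∀ i ∈ Finset.range (m+p),
      pFib p (i+1) * pFib p (m+p+1-i) =
      pFib p (i+1) * pFib p (m+p-i) +
        (if i < m + 1 then pFib p (i+1) * pFib p (m-i) else 0) := by
    intro i hi
    rw [Finset.mem_range] at hi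
    rcases le_or_gt i m with him | him
    · rw [if_pos (by omega)]
      have h3 : pFib p (m+p+1-i) = pFib p (m+p-i) + pFib p (m-i) := by
        have := pFib_rec (p := p) (k := m+p+1-i) (by omega)
        rwa [show m+p+1-i-1-p = m-i by omega, show m+p+1-i-1 = m+p-i by omega] at this
      rw [h3, Nat.mul_add]
    · rw [if_neg (by omega), add_zero]
      congr 1
      rw [pFib_one hp (by omega) (by omega), pFib_one hp (by omega) (by omega)]
  rw [Finset.sum_congr rfl key, Finset.sum_add_distrib]
  have h2 : ∑ i ∈ Finset.range (m+p), (if i < m + 1 then pFib p (i+1) * pFib p (m-i) else 0)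
      = ∑ i ∈ Finset.range m, pFib p (i+1) * pFib p (m-i) := by
    rw [← Finset.sum_subset (Finset.range_subset_range.2 (show m+1 ≤ m+p by omega))
      (fun x _ hx => if_neg (by rw [Finset.mem_range] at hx; omega))]
    rw [Finset.sum_range_succ, if_pos (by omega), show m - m = 0 by omega, pFib_zero,
      mul_zero, add_zero]
    exact Finset.sum_congr rfl fun i hi => if_pos (by rw [Finset.mem_range] at hi; omega)
  rw [h2]

/-- `V x = ∑_{t=0}^{p} p^t (p+1)^{p-t} F_{x-t}` (as an integer). -/
def V (p x : ℕ) : ℤ :=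
  ∑ t ∈ Finset.range (p+1), (p:ℤ)^t * ((p:ℤ)+1)^(p-t) * pFib p (x - t)

lemma V_tel (x : ℕ) :
    ((p:ℤ)+1) * V p x =
      ((p:ℤ)+1)^(p+1) * pFib p x - (p:ℤ)^(p+1) * pFib p (x-(p+1)) + p * V p (x-1) := by
  have tel := Finset.sum_range_sub' (f := fun t => (p:ℤ)^t * ((p:ℤ)+1)^(p+1-t) * pFib p (x - t))
    (n := p+1)
  simp only [pow_zero, Nat.sub_zero, Nat.sub_self, pow_zero] at tel
  have expand : ∀ t ∈ Finset.range (p+1),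
      (p:ℤ)^t * ((p:ℤ)+1)^(p+1-t) * pFib p (x - t)
        - (p:ℤ)^(t+1) * ((p:ℤ)+1)^(p+1-(t+1)) * pFib p (x - (t+1))
      = ((p:ℤ)+1) * ((p:ℤ)^t * ((p:ℤ)+1)^(p-t) * pFib p (x - t))
        - (p:ℤ) * ((p:ℤ)^t * ((p:ℤ)+1)^(p-t) * pFib p (x - 1 - t)) := by
    intro t ht
    rw [Finset.mem_range] at ht
    rw [show p+1-t = (p-t)+1 by omega, show p+1-(t+1) = p - t by omega,
      show x - (t+1) = x - 1 - t by omega, pow_succ, pow_succ]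
    ring
  rw [Finset.sum_congr rfl expand, Finset.sum_sub_distrib, ← Finset.mul_sum, ← Finset.mul_sum] at tel
  unfold V
  linear_combination tel

lemma V_rec (hp : 1 ≤ p) {x : ℕ} (hx : p + 2 ≤ x) :
    V p x = V p (x-1) + V p (x-(p+1)) := by
  unfold V
  rw [← Finset.sum_add_distrib]
  refine Finset.sum_congr rfl fun t ht => ?_
  rw [Finset.mem_range] at ht
  have h2 : 2 ≤ x - t := by omega
  have := pFib_rec2 hp h2
  rw [show x - t - 1 - p = x - (p+1) - t by omega, show x - t - 1 = x - 1 - t by omega] at this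
  rw [this]
  push_cast
  ring

/-- The right-hand side of the identity. -/
def R (p n : ℕ) : ℤ :=
  (p:ℤ)^p * n * pFib p n +
    ∑ t ∈ Finset.range (p+1), (p:ℤ)^t * ((p:ℤ)+1)^(p-t) * ((n:ℤ) + p - t) * pFib p (n - t)

lemma geom {m : ℕ} (hm : m ≤ p + 1) :
    ∑ t ∈ Finset.range m, (p:ℤ)^t * ((p:ℤ)+1)^(p-t)
      = ((p:ℤ)+1)^(p+1) - (p:ℤ)^m * ((p:ℤ)+1)^(p+1-m) := by
  induction m with
  | zero => simp
  | succ k ih =>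
    rw [Finset.sum_range_succ, ih (by omega), show p+1-k = (p-k)+1 by omega, pow_succ, pow_succ]
    rw [show p + 1 - (k+1) = p - k by omega]
    ring

lemma Blem {n : ℕ} (hn : n ≤ p + 1) :
    ∑ t ∈ Finset.range n, (p:ℤ)^t * ((p:ℤ)+1)^(p-t) * ((n:ℤ) + p - t)
      = (n:ℤ) * ((p:ℤ)+1)^(p+1) := by
  induction n with
  | zero => simp
  | succ k ih =>
    have expand : ∀ t ∈ Finset.range k,
        (p:ℤ)^t * ((p:ℤ)+1)^(p-t) * (((k:ℤ)+1) + p - t)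
        = (p:ℤ)^t * ((p:ℤ)+1)^(p-t) * ((k:ℤ) + p - t) + (p:ℤ)^t * ((p:ℤ)+1)^(p-t) := by
      intro t ht; ring
    rw [Finset.sum_range_succ]
    push_cast
    rw [Finset.sum_congr rfl expand, Finset.sum_add_distrib, ih (by omega), geom (by omega)]
    rw [show p + 1 - k = (p-k)+1 by omega, pow_succ]
    have : ((k:ℤ)+1) + p - k = (p:ℤ) + 1 := by ring
    rw [this]
    ring

lemma base (hp : 1 ≤ p) {n : ℕ} (hn : n ≤ p + 1) :
    ((p:ℤ)^p + ((p:ℤ)+1)^(p+1)) * S p n = R p n := by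
  rw [S_small hp hn]
  unfold R
  rcases Nat.eq_zero_or_pos n with rfl | hn1
  · simp [pFib_zero]
  · have hfn : pFib p n = 1 := pFib_one hp hn1 hn
    have hsum : ∑ t ∈ Finset.range (p+1), (p:ℤ)^t * ((p:ℤ)+1)^(p-t) * ((n:ℤ) + p - t) * pFib p (n - t)
        = ∑ t ∈ Finset.range n, (p:ℤ)^t * ((p:ℤ)+1)^(p-t) * ((n:ℤ) + p - t) := by
      rw [← Finset.sum_subset (Finset.range_subset_range.2 (show n ≤ p+1 by omega))
        (fun x _ hx => by
          rw [Finset.mem_range] at hx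
          rw [show n - x = 0 by omega, pFib_zero]
          push_cast; ring)]
      refine Finset.sum_congr rfl fun t ht => ?_
      rw [Finset.mem_range] at ht
      rw [pFib_one hp (by omega) (by omega)]
      ring
    rw [hsum, Blem hn, hfn]
    push_cast
    ring

lemma R_rec (hp : 1 ≤ p) {m : ℕ} (hm : 1 ≤ m) :
    R p (m+p+1) = R p (m+p) + R p m + ((p:ℤ)^p + ((p:ℤ)+1)^(p+1)) * pFib p (m+p+1) := by
  have hfn : (pFib p (m+p+1) : ℤ) = pFib p (m+p) + pFib p m := by
    have h0 := pFib_rec (p := p) (k := m+p+1) (by omega)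
    rw [show m+p+1-1-p = m by omega, show m+p+1-1 = m+p by omega] at h0
    exact_mod_cast congrArg (Nat.cast : ℕ → ℤ) h0
  have hsum : ∑ t ∈ Finset.range (p+1),
        (p:ℤ)^t * ((p:ℤ)+1)^(p-t) * ((m:ℤ) + (p:ℤ) + 1 + (p:ℤ) - (t:ℤ)) * pFib p (m+p+1 - t)
      = (∑ t ∈ Finset.range (p+1),
          (p:ℤ)^t * ((p:ℤ)+1)^(p-t) * ((m:ℤ) + (p:ℤ) + (p:ℤ) - (t:ℤ)) * pFib p (m+p - t))
        + (∑ t ∈ Finset.range (p+1),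
          (p:ℤ)^t * ((p:ℤ)+1)^(p-t) * ((m:ℤ) + (p:ℤ) - (t:ℤ)) * pFib p (m - t))
        + (V p (m+p) + ((p:ℤ)+1) * V p m) := by
    unfold V
    rw [Finset.mul_sum, ← Finset.sum_add_distrib, ← Finset.sum_add_distrib,
      ← Finset.sum_add_distrib]
    refine Finset.sum_congr rfl fun t ht => ?_
    rw [Finset.mem_range] at ht
    have hk : (pFib p (m+p+1-t) : ℤ) = pFib p (m+p-t) + pFib p (m-t) := by
      have h2 := pFib_rec2 hp (k := m+p+1-t) (by omega)
      rw [show m+p+1-t-1-p = m-t by omega, show m+p+1-t-1 = m+p-t by omega] at h2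
      exact_mod_cast congrArg (Nat.cast : ℕ → ℤ) h2
    rw [hk]
    ring
  have hVrec : V p (m+p+1) = V p (m+p) + V p m := by
    have h3 := V_rec hp (x := m+p+1) (by omega)
    rwa [show m+p+1-1 = m+p by omega, show m+p+1-(p+1) = m by omega] at h3
  have hVtel := V_tel (p := p) (x := m+p+1)
  rw [show m+p+1-(p+1) = m by omega, show m+p+1-1 = m+p by omega] at hVtel
  unfold R
  push_cast
  rw [hsum]
  linear_combination (-((p:ℤ)+1)) * hVrec + hVtel + ((p:ℤ)^p * ((m:ℤ)+(p:ℤ))) * hfn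

theorem mainB (hp : 1 ≤ p) : ∀ n : ℕ,
    ((p:ℤ)^p + ((p:ℤ)+1)^(p+1)) * S p n = R p n := by
  intro n
  induction n using Nat.strong_induction_on with
  | _ n ih =>
    rcases le_or_gt n (p+1) with hn | hn
    · exact base hp hn
    · have hm : 1 ≤ n - p - 1 := by omega
      obtain ⟨m, hmn⟩ : ∃ m, n = m + p + 1 := ⟨n - p - 1, by omega⟩
      subst hmn
      rw [S_rec hp m, R_rec hp (by omega)]
      push_cast
      rw [← ih (m+p) (by omega), ← ih m (by omega)]
      ring



variable {p : ℕ}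

lemma isPString_mono {n : ℕ} {s t : Fin n → Bool} (hs : isPString p s)
    (h : ∀ j, t j = true → s j = true) : isPString p t :=
  fun i j hij hi hj => hs i j hij (h i hi) (h j hj)

lemma isP_prefix {n k : ℕ} {s : Fin n → Bool} (hs : isPString p s)
    (h : ∀ a : Fin k, (a : ℕ) < n) :
    isPString p (fun a : Fin k => s ⟨(a : ℕ), h a⟩) := by
  intro i j hij hi hj
  have h2 : (i : ℕ) + p < (j : ℕ) := hs ⟨(i:ℕ), h i⟩ ⟨(j:ℕ), h j⟩ hij hi hj
  exact h2

lemma isP_offset {n k off : ℕ} {s : Fin n → Bool} (hs : isPString p s)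
    (h : ∀ a : Fin k, (a : ℕ) + off < n) :
    isPString p (fun a : Fin k => s ⟨(a : ℕ) + off, h a⟩) := by
  intro i j hij hi hj
  have h2 : (i : ℕ) + off + p < (j : ℕ) + off :=
    hs ⟨(i:ℕ) + off, h i⟩ ⟨(j:ℕ) + off, h j⟩ (show (i:ℕ) + off < (j:ℕ) + off by omega) hi hj
  omega

/-- number of Fibonacci p-strings of length m -/
noncomputable def cP (p m : ℕ) : ℕ := Nat.card {s : Fin m → Bool // isPString p s}

lemma cP_zero : cP p 0 = 1 := by
  haveI : Unique {s : Fin 0 → Bool // isPString p s} :=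
    { default := ⟨fun i => i.elim0, fun i => i.elim0⟩
      uniq := fun a => Subtype.ext (funext fun i => i.elim0) }
  exact Nat.card_unique

lemma cP_succ (hp : 1 ≤ p) (m : ℕ) : cP p (m+1) = cP p m + cP p (m - p) := by
  classical
  let F : ({u : Fin m → Bool // isPString p u} ⊕ {v : Fin (m-p) → Bool // isPString p v}) →
      {s : Fin (m+1) → Bool // isPString p s} := fun x =>
    match x with
    | Sum.inl ⟨u, hu⟩ =>
      ⟨fun j => if h : (j:ℕ) < m then u ⟨(j:ℕ), h⟩ else false, by
        intro i j hij hi hj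
        simp only [] at hi hj
        by_cases h1 : (i:ℕ) < m
        · by_cases h2 : (j:ℕ) < m
          · rw [dif_pos h1] at hi
            rw [dif_pos h2] at hj
            exact hu ⟨(i:ℕ), h1⟩ ⟨(j:ℕ), h2⟩ hij hi hj
          · rw [dif_neg h2] at hj
            exact absurd hj (by simp)
        · rw [dif_neg h1] at hi
          exact absurd hi (by simp)⟩
    | Sum.inr ⟨v, hv⟩ =>
      ⟨fun j => if h : (j:ℕ) < m - p then v ⟨(j:ℕ), h⟩ else decide ((j:ℕ) = m), by
        intro i j hij hi hj
        simp only [] at hi hj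
        by_cases h1 : (i:ℕ) < m - p
        · by_cases h2 : (j:ℕ) < m - p
          · rw [dif_pos h1] at hi
            rw [dif_pos h2] at hj
            exact hv ⟨(i:ℕ), h1⟩ ⟨(j:ℕ), h2⟩ hij hi hj
          · rw [dif_neg h2] at hj
            have hjm : (j:ℕ) = m := by simpa using hj
            omega
        · rw [dif_neg h1] at hi
          have him : (i:ℕ) = m := by simpa using hi
          have := j.isLt
          omega⟩
  have hinj : Function.Injective F := by
    rintro (⟨u, hu⟩ | ⟨v, hv⟩) (⟨u', hu'⟩ | ⟨v', hv'⟩) h <;>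
      have hv0 := congrArg Subtype.val h
    · congr 1
      apply Subtype.ext
      funext a
      have h2 : (if h : (a:ℕ) < m then u ⟨(a:ℕ), h⟩ else false)
          = (if h : (a:ℕ) < m then u' ⟨(a:ℕ), h⟩ else false) :=
        congrFun hv0 ⟨(a:ℕ), by have := a.isLt; omega⟩
      rw [dif_pos a.isLt, dif_pos a.isLt] at h2
      exact h2
    · exfalso
      have h2 : (if h : (m:ℕ) < m then u ⟨(m:ℕ), h⟩ else false)
          = (if h : (m:ℕ) < m - p then v' ⟨(m:ℕ), h⟩ else decide ((m:ℕ) = m)) :=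
        congrFun hv0 (Fin.last m)
      rw [dif_neg (by omega), dif_neg (by omega)] at h2
      simp at h2
    · exfalso
      have h2 : (if h : (m:ℕ) < m - p then v ⟨(m:ℕ), h⟩ else decide ((m:ℕ) = m))
          = (if h : (m:ℕ) < m then u' ⟨(m:ℕ), h⟩ else false) :=
        congrFun hv0 (Fin.last m)
      rw [dif_neg (by omega), dif_neg (by omega)] at h2
      simp at h2
    · congr 1
      apply Subtype.ext
      funext b
      have h2 : (if h : (b:ℕ) < m - p then v ⟨(b:ℕ), h⟩ else decide ((b:ℕ) = m))
          = (if h : (b:ℕ) < m - p then v' ⟨(b:ℕ), h⟩ else decide ((b:ℕ) = m)) :=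
        congrFun hv0 ⟨(b:ℕ), by have := b.isLt; omega⟩
      rw [dif_pos b.isLt, dif_pos b.isLt] at h2
      exact h2
  have hsurj : Function.Surjective F := by
    rintro ⟨s, hs⟩
    by_cases h : s (Fin.last m) = true
    · refine ⟨Sum.inr ⟨fun b => s ⟨(b:ℕ), by have := b.isLt; omega⟩,
        isP_prefix hs (fun b => by have := b.isLt; omega)⟩, ?_⟩
      apply Subtype.ext
      funext j
      show (if h2 : (j:ℕ) < m - p then s ⟨(j:ℕ), by have := j.isLt; omega⟩
          else decide ((j:ℕ) = m)) = s j
      by_cases hj : (j:ℕ) < m - p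
      · rw [dif_pos hj]
      · rw [dif_neg hj]
        rcases eq_or_ne (j:ℕ) m with he | hne
        · have hj1 : j = Fin.last m := Fin.ext he
          simp [hj1, h]
        · cases hsj : s j with
          | false => simp [hne]
          | true =>
            exfalso
            have hjm : (j:ℕ) < m := by have := j.isLt; omega
            have h9 : (j:ℕ) + p < m := hs j (Fin.last m) hjm hsj h
            omega
    · refine ⟨Sum.inl ⟨fun a => s ⟨(a:ℕ), by have := a.isLt; omega⟩,
        isP_prefix hs (fun a => by have := a.isLt; omega)⟩, ?_⟩
      apply Subtype.ext
      funext j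
      show (if h2 : (j:ℕ) < m then s ⟨(j:ℕ), by have := j.isLt; omega⟩ else false) = s j
      by_cases hj : (j:ℕ) < m
      · rw [dif_pos hj]
      · rw [dif_neg hj]
        have hj1 : j = Fin.last m := Fin.ext (show (j:ℕ) = m from by have := j.isLt; omega)
        have h0 : s (Fin.last m) = false := by simpa using h
        rw [hj1, h0]
  rw [cP, cP, cP, Nat.card_congr (Equiv.ofBijective F ⟨hinj, hsurj⟩).symm, Nat.card_sum]


lemma pFib_clamp1 (hp : 1 ≤ p) (i : ℕ) : pFib p ((i - p) + p + 1) = pFib p (i + 1) := by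
  rcases le_or_gt p i with h | h
  · congr 1
    omega
  · rw [show i - p = 0 by omega]
    rw [pFib_one hp (by omega) (by omega), pFib_one hp (by omega) (by omega)]

lemma pFib_clamp2 (hp : 1 ≤ p) {n i : ℕ} (h : i < n) :
    pFib p ((n - 1 - i - p) + p + 1) = pFib p (n - i) := by
  rcases le_or_gt p (n - 1 - i) with h1 | h1
  · congr 1
    omega
  · rw [show n - 1 - i - p = 0 by omega]
    rw [pFib_one hp (by omega) (by omega), pFib_one hp (by omega) (by omega)]

lemma cP_eq (hp : 1 ≤ p) : ∀ m : ℕ, cP p m = pFib p (m + p + 1) := by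
  intro m
  induction m using Nat.strong_induction_on with
  | _ m ih =>
    match m with
    | 0 =>
      rw [cP_zero, pFib_one hp (by omega) (by omega)]
    | (m + 1) =>
      rw [cP_succ hp m, ih m (by omega), ih (m - p) (by omega)]
      have h1 : pFib p (m + 1 + p + 1) = pFib p (m + p + 1) + pFib p (m + 1) := by
        have h0 := pFib_rec (p := p) (k := m + p + 2) (by omega)
        rw [show m + p + 2 - 1 - p = m + 1 by omega, show m + p + 2 - 1 = m + p + 1 by omega]
          at h0
        rw [show m + 1 + p + 1 = m + p + 2 by omega, h0]
      rw [h1, pFib_clamp1 hp m]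

lemma update_isP {n : ℕ} {s : Fin n → Bool} (hs : isPString p s) (i : Fin n) :
    isPString p (Function.update s i false) := by
  refine isPString_mono hs (fun j hj => ?_)
  rcases eq_or_ne j i with rfl | hne
  · rw [Function.update_self] at hj
    exact absurd hj (by simp)
  · rwa [Function.update_of_ne hne] at hj

lemma card_fixed (hp : 1 ≤ p) {n : ℕ} (i : Fin n) :
    Nat.card {s : Fin n → Bool // isPString p s ∧ s i = true}
      = cP p ((i:ℕ) - p) * cP p (n - 1 - (i:ℕ) - p) := by
  classical
  let F : ({u : Fin ((i:ℕ) - p) → Bool // isPString p u} ×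
      {v : Fin (n - 1 - (i:ℕ) - p) → Bool // isPString p v}) →
      {s : Fin n → Bool // isPString p s ∧ s i = true} := fun x =>
    match x with
    | (⟨u, hu⟩, ⟨v, hv⟩) =>
      ⟨fun j => if h1 : (j:ℕ) < (i:ℕ) - p then u ⟨(j:ℕ), h1⟩
        else if h2 : (i:ℕ) + p + 1 ≤ (j:ℕ) then
          v ⟨(j:ℕ) - ((i:ℕ) + p + 1), by have := j.isLt; omega⟩
        else decide ((j:ℕ) = (i:ℕ)), by
      constructor
      · intro a b hab ha hb
        simp only [] at ha hb
        by_cases ha1 : (a:ℕ) < (i:ℕ) - p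
        · rw [dif_pos ha1] at ha
          by_cases hb1 : (b:ℕ) < (i:ℕ) - p
          · rw [dif_pos hb1] at hb
            exact hu ⟨(a:ℕ), ha1⟩ ⟨(b:ℕ), hb1⟩ hab ha hb
          · rw [dif_neg hb1] at hb
            by_cases hb2 : (i:ℕ) + p + 1 ≤ (b:ℕ)
            · omega
            · rw [dif_neg hb2] at hb
              have : (b:ℕ) = (i:ℕ) := by simpa using hb
              omega
        · rw [dif_neg ha1] at ha
          by_cases ha2 : (i:ℕ) + p + 1 ≤ (a:ℕ)
          · rw [dif_pos ha2] at ha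
            have hb2 : (i:ℕ) + p + 1 ≤ (b:ℕ) := by omega
            have hb1 : ¬((b:ℕ) < (i:ℕ) - p) := by omega
            rw [dif_neg hb1, dif_pos hb2] at hb
            have h9 : ((a:ℕ) - ((i:ℕ) + p + 1)) + p < (b:ℕ) - ((i:ℕ) + p + 1) :=
              hv ⟨(a:ℕ) - ((i:ℕ) + p + 1), by have := a.isLt; omega⟩
                ⟨(b:ℕ) - ((i:ℕ) + p + 1), by have := b.isLt; omega⟩
                (show (a:ℕ) - ((i:ℕ) + p + 1) < (b:ℕ) - ((i:ℕ) + p + 1) by omega) ha hb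
            omega
          · rw [dif_neg ha2] at ha
            have haI : (a:ℕ) = (i:ℕ) := by simpa using ha
            by_cases hb2 : (i:ℕ) + p + 1 ≤ (b:ℕ)
            · omega
            · have hb1 : ¬((b:ℕ) < (i:ℕ) - p) := by omega
              rw [dif_neg hb1, dif_neg hb2] at hb
              have : (b:ℕ) = (i:ℕ) := by simpa using hb
              omega
      · show (if h1 : (i:ℕ) < (i:ℕ) - p then _ else if h2 : (i:ℕ) + p + 1 ≤ (i:ℕ) then _
          else decide ((i:ℕ) = (i:ℕ))) = true
        rw [dif_neg (by omega), dif_neg (by omega)]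
        simp⟩
  have hinj : Function.Injective F := by
    rintro ⟨⟨u, hu⟩, ⟨v, hv⟩⟩ ⟨⟨u', hu'⟩, ⟨v', hv'⟩⟩ h
    have hv0 := congrArg Subtype.val h
    refine Prod.ext (Subtype.ext ?_) (Subtype.ext ?_)
    · funext a
      have h2 : (if h1 : (a:ℕ) < (i:ℕ) - p then u ⟨(a:ℕ), h1⟩
            else if h2 : (i:ℕ) + p + 1 ≤ (a:ℕ) then
              v ⟨(a:ℕ) - ((i:ℕ) + p + 1), by have := a.isLt; have := i.isLt; omega⟩
            else decide ((a:ℕ) = (i:ℕ)))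
          = (if h1 : (a:ℕ) < (i:ℕ) - p then u' ⟨(a:ℕ), h1⟩
            else if h2 : (i:ℕ) + p + 1 ≤ (a:ℕ) then
              v' ⟨(a:ℕ) - ((i:ℕ) + p + 1), by have := a.isLt; have := i.isLt; omega⟩
            else decide ((a:ℕ) = (i:ℕ))) :=
        congrFun hv0 ⟨(a:ℕ), by have := a.isLt; have := i.isLt; omega⟩
      rw [dif_pos a.isLt, dif_pos a.isLt] at h2
      exact h2
    · funext b
      have h2 : (if h1 : (b:ℕ) + ((i:ℕ) + p + 1) < (i:ℕ) - p then
              u ⟨(b:ℕ) + ((i:ℕ) + p + 1), h1⟩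
            else if h2 : (i:ℕ) + p + 1 ≤ (b:ℕ) + ((i:ℕ) + p + 1) then
              v ⟨(b:ℕ) + ((i:ℕ) + p + 1) - ((i:ℕ) + p + 1), by have := b.isLt; omega⟩
            else decide ((b:ℕ) + ((i:ℕ) + p + 1) = (i:ℕ)))
          = (if h1 : (b:ℕ) + ((i:ℕ) + p + 1) < (i:ℕ) - p then
              u' ⟨(b:ℕ) + ((i:ℕ) + p + 1), h1⟩
            else if h2 : (i:ℕ) + p + 1 ≤ (b:ℕ) + ((i:ℕ) + p + 1) then
              v' ⟨(b:ℕ) + ((i:ℕ) + p + 1) - ((i:ℕ) + p + 1), by have := b.isLt; omega⟩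
            else decide ((b:ℕ) + ((i:ℕ) + p + 1) = (i:ℕ))) :=
        congrFun hv0 ⟨(b:ℕ) + ((i:ℕ) + p + 1), by have := b.isLt; omega⟩
      have hc1 : ¬((b:ℕ) + ((i:ℕ) + p + 1) < (i:ℕ) - p) := by omega
      have hc2 : (i:ℕ) + p + 1 ≤ (b:ℕ) + ((i:ℕ) + p + 1) := by omega
      rw [dif_neg hc1, dif_neg hc1, dif_pos hc2, dif_pos hc2] at h2
      have hb : b = ⟨(b:ℕ) + ((i:ℕ) + p + 1) - ((i:ℕ) + p + 1), by have := b.isLt; omega⟩ :=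
        Fin.ext (show (b:ℕ) = (b:ℕ) + ((i:ℕ) + p + 1) - ((i:ℕ) + p + 1) from by omega)
      rw [hb]
      exact h2
  have hsurj : Function.Surjective F := by
    rintro ⟨s, hs, hsi⟩
    refine ⟨(⟨fun a => s ⟨(a:ℕ), by have := a.isLt; have := i.isLt; omega⟩,
        isP_prefix hs (fun a => by have := a.isLt; have := i.isLt; omega)⟩,
      ⟨fun b => s ⟨(b:ℕ) + ((i:ℕ) + p + 1), by have := b.isLt; omega⟩,
        isP_offset hs (fun b => by have := b.isLt; omega)⟩), ?_⟩
    apply Subtype.ext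
    funext j
    show (if h1 : (j:ℕ) < (i:ℕ) - p then s ⟨(j:ℕ), _⟩
        else if h2 : (i:ℕ) + p + 1 ≤ (j:ℕ) then
          s ⟨(j:ℕ) - ((i:ℕ) + p + 1) + ((i:ℕ) + p + 1), _⟩
        else decide ((j:ℕ) = (i:ℕ))) = s j
    by_cases h1 : (j:ℕ) < (i:ℕ) - p
    · rw [dif_pos h1]
    · by_cases h2 : (i:ℕ) + p + 1 ≤ (j:ℕ)
      · rw [dif_neg h1, dif_pos h2]
        exact congrArg s
          (Fin.ext (show (j:ℕ) - ((i:ℕ) + p + 1) + ((i:ℕ) + p + 1) = (j:ℕ) from by omega))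
      · rw [dif_neg h1, dif_neg h2]
        rcases eq_or_ne (j:ℕ) (i:ℕ) with he | hne
        · have hji : j = i := Fin.ext he
          simp [hji, hsi]
        · cases hsj : s j with
          | false => simp [hne]
          | true =>
            exfalso
            rcases lt_trichotomy (j:ℕ) (i:ℕ) with hlt | heq | hgt
            · have h9 : (j:ℕ) + p < (i:ℕ) := hs j i hlt hsj hsi
              omega
            · exact hne heq
            · have h9 : (i:ℕ) + p < (j:ℕ) := hs i j hgt hsi hsj
              omega
  rw [Nat.card_congr (Equiv.ofBijective F ⟨hinj, hsurj⟩).symm, Nat.card_prod, cP, cP]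

lemma card_one_at (hp : 1 ≤ p) {n : ℕ} (i : Fin n) :
    Nat.card {s : Fin n → Bool // isPString p s ∧ s i = true}
      = pFib p ((i:ℕ) + 1) * pFib p (n - (i:ℕ)) := by
  rw [card_fixed hp i, cP_eq hp, cP_eq hp, pFib_clamp1 hp, pFib_clamp2 hp i.isLt]

lemma ePCube_eq_sum (p n : ℕ) :
    ePCube p n
      = ∑ i : Fin n, Nat.card {s : Fin n → Bool // isPString p s ∧ s i = true} := by
  classical
  let F : {x : (Fin n → Bool) × Fin n // isPString p x.1 ∧ x.1 x.2 = true} →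
      ((cube n).induce {s : Fin n → Bool | isPString p s}).edgeSet := fun x =>
    ⟨s(⟨x.1.1, x.2.1⟩, ⟨Function.update x.1.1 x.1.2 false, update_isP x.2.1 x.1.2⟩), by
      rw [SimpleGraph.mem_edgeSet]
      show (cube n).Adj x.1.1 (Function.update x.1.1 x.1.2 false)
      refine ⟨x.1.2, ?_, ?_⟩
      · show x.1.1 x.1.2 ≠ Function.update x.1.1 x.1.2 false x.1.2
        rw [Function.update_self, x.2.2]
        simp
      · intro y hy
        by_contra hne'
        exact hy (show x.1.1 y = Function.update x.1.1 x.1.2 false y from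
          by rw [Function.update_of_ne hne'])⟩
  have hinj : Function.Injective F := by
    rintro ⟨⟨sx, ix⟩, hx1, hx2⟩ ⟨⟨sy, iy⟩, hy1, hy2⟩ h
    simp only [] at hx1 hx2 hy1 hy2
    have h0 := congrArg Subtype.val h
    rw [Sym2.eq_iff] at h0
    rcases h0 with ⟨h1, h2⟩ | ⟨h1, h2⟩
    · have hs : sx = sy := congrArg Subtype.val h1
      have hu : Function.update sx ix false = Function.update sy iy false :=
        congrArg Subtype.val h2
      have hii : ix = iy := by
        by_contra hne
        have e1 := congrFun hu ix
        rw [Function.update_self, Function.update_of_ne hne] at e1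
        rw [← hs, hx2] at e1
        exact Bool.false_ne_true e1
      exact Subtype.ext (Prod.ext hs hii)
    · exfalso
      have hs : sx = Function.update sy iy false := congrArg Subtype.val h1
      have ht : Function.update sx ix false = sy := congrArg Subtype.val h2
      rcases eq_or_ne iy ix with he | hne
      · have h3 := hy2
        rw [← ht, he, Function.update_self] at h3
        exact Bool.false_ne_true h3
      · have h3 := hy2
        rw [← ht, Function.update_of_ne hne] at h3
        have h4 := congrFun hs iy
        rw [Function.update_self] at h4
        rw [h3] at h4
        simp at h4
  have hsurj : Function.Surjective F := by
    rintro ⟨e, he⟩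
    induction e using Sym2.ind with
    | _ a b =>
      rw [SimpleGraph.mem_edgeSet] at he
      obtain ⟨j, hj, huniq⟩ : ∃! k, (a : Fin n → Bool) k ≠ (b : Fin n → Bool) k := he
      cases hab : (a : Fin n → Bool) j with
      | true =>
        have hbj : (b : Fin n → Bool) j = false := by
          cases hbj' : (b : Fin n → Bool) j
          · rfl
          · exact absurd (hab.trans hbj'.symm) hj
        refine ⟨⟨((a : Fin n → Bool), j), a.2, hab⟩, ?_⟩
        apply Subtype.ext
        refine Sym2.eq_iff.mpr (Or.inl ⟨Subtype.ext rfl, Subtype.ext ?_⟩)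
        funext k
        show Function.update (a : Fin n → Bool) j false k = (b : Fin n → Bool) k
        rcases eq_or_ne k j with rfl | hk
        · rw [Function.update_self, hbj]
        · rw [Function.update_of_ne hk]
          by_contra h'
          exact hk (huniq k h')
      | false =>
        have hbj : (b : Fin n → Bool) j = true := by
          cases hbj' : (b : Fin n → Bool) j
          · exact absurd (hab.trans hbj'.symm) hj
          · rfl
        refine ⟨⟨((b : Fin n → Bool), j), b.2, hbj⟩, ?_⟩
        apply Subtype.ext
        refine Eq.trans ?_ (Sym2.eq_swap)
        refine Sym2.eq_iff.mpr (Or.inl ⟨Subtype.ext rfl, Subtype.ext ?_⟩)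
        funext k
        show Function.update (b : Fin n → Bool) j false k = (a : Fin n → Bool) k
        rcases eq_or_ne k j with rfl | hk
        · rw [Function.update_self, hab]
        · rw [Function.update_of_ne hk]
          by_contra h'
          exact hk (huniq k (fun heq => h' heq.symm))
  rw [ePCube, Nat.card_congr (Equiv.ofBijective F ⟨hinj, hsurj⟩).symm]
  let e4 : {x : (Fin n → Bool) × Fin n // isPString p x.1 ∧ x.1 x.2 = true} ≃
      (Σ i : Fin n, {s : Fin n → Bool // isPString p s ∧ s i = true}) :=
    ⟨fun x => ⟨x.1.2, x.1.1, x.2⟩, fun y => ⟨(y.2.1, y.1), y.2.2⟩,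
      fun x => rfl, fun y => rfl⟩
  rw [Nat.card_congr e4]
  haveI : ∀ i : Fin n, Fintype {s : Fin n → Bool // isPString p s ∧ s i = true} :=
    fun i => Fintype.ofFinite _
  rw [Nat.card_eq_fintype_card, Fintype.card_sigma]
  exact Finset.sum_congr rfl fun i _ => (Nat.card_eq_fintype_card).symm

lemma ePCube_eq_S (hp : 1 ≤ p) (n : ℕ) : ePCube p n = S p n := by
  rw [ePCube_eq_sum]
  rw [Finset.sum_congr rfl (fun i _ => card_one_at hp i)]
  rw [Fin.sum_univ_eq_sum_range (fun k => pFib p (k + 1) * pFib p (n - k)) n]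
  rfl

end PC

/-- Theorem 4.1(ii) (cleared of denominators): for `p ≥ 1` and `n ≥ p+1`, as an
identity of integers, `(p^p + (p+1)^{p+1})·|E(Γ^p_n)|
  = p^p·n·F^p_n + ∑_{t=0}^{p} p^t·(p+1)^{p-t}·(n+p-t)·F^p_{n-t}`. -/
theorem ePCube_linear_form (p n : ℕ) (hp : 1 ≤ p) (hn : p + 1 ≤ n) :
    ((p : ℤ) ^ p + ((p : ℤ) + 1) ^ (p + 1)) * ePCube p n =
      (p : ℤ) ^ p * n * pFib p n +
      ∑ t ∈ Finset.range (p + 1),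
        (p : ℤ) ^ t * ((p : ℤ) + 1) ^ (p - t) * ((n : ℤ) + p - t) * pFib p (n - t) := by
  rw [PC.ePCube_eq_S hp n]
  have h := PC.mainB hp n
  rw [PC.R] at h
  exact h
end

section
/- For all integers p ≥ 1 and n ≥ 1, the number of edges of the Fibonacci p-cube satisfies |E(Γ^p_n)| = ∑_{i=1}^{n} F^p_i · F^p_{n−i+1}. -/
instance (p n : ℕ) : DecidablePred (isPString p (n := n)) := fun s => by
  unfold isPString; infer_instance

theorem cons_pstring (p m : ℕ) (b : Bool) (t : Fin m → Bool) :
    isPString p (Fin.cons b t) ↔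
      isPString p t ∧ (b = true → ∀ j : Fin m, (j : ℕ) < p → t j = false) := by
  constructor
  · intro h
    refine ⟨fun i j hij hi hj => ?_, fun hb j hjp => ?_⟩
    · have := h i.succ j.succ (by simpa using hij) (by simpa using hi) (by simpa using hj)
      simp only [Fin.val_succ] at this; omega
    · by_contra hj
      rw [Bool.not_eq_false] at hj
      have := h 0 j.succ (by simp) (by simpa using hb) (by simpa using hj)
      simp at this; omega
  · rintro ⟨ht, hz⟩ i j hij hi hj
    induction i using Fin.cases with
    | zero =>
      induction j using Fin.cases with
      | zero => simp at hij
      | succ j =>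
        simp only [Fin.cons_succ] at hj
        simp only [Fin.cons_zero] at hi
        by_contra hc
        simp only [Fin.val_zero, Fin.val_succ] at hc
        have hjp : (j:ℕ) < p := by omega
        have := hz hi j hjp
        rw [hj] at this; simp at this
    | succ i =>
      induction j using Fin.cases with
      | zero => simp [Fin.lt_def] at hij
      | succ j =>
        simp only [Fin.cons_succ] at hi hj
        have := ht i j (by simpa using hij) hi hj
        simp only [Fin.val_succ]; omega

theorem pFib_succ (p n : ℕ) :
    pFib p (n + 1) = if n + 1 ≤ p then 1 else pFib p n + pFib p (n - p) := by
  rw [pFib]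

theorem pFib_one_of (p k : ℕ) (hp : 1 ≤ p) (h1 : 1 ≤ k) (h2 : k ≤ p + 1) :
    pFib p k = 1 := by
  induction k with
  | zero => omega
  | succ k ih =>
    rw [pFib_succ]
    by_cases h : k + 1 ≤ p
    · simp [h]
    · have hk : k = p := by omega
      subst hk
      simp only [h, if_false]
      rw [ih (by omega) (by omega)]
      simp [pFib]

/-- The family of counted finsets: length `m` p-strings whose first `k` entries are `0`,
and, if `e = true`, with no `1` in the last `p` positions. -/
def pSet (p : ℕ) (e : Bool) (m k : ℕ) : Finset (Fin m → Bool) :=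
  Finset.univ.filter (fun s => isPString p s ∧ (∀ j : Fin m, (j : ℕ) < k → s j = false) ∧
    (e = true → ∀ j : Fin m, m ≤ (j : ℕ) + p → s j = false))

theorem mem_pSet {p : ℕ} {e : Bool} {m k : ℕ} {s : Fin m → Bool} :
    s ∈ pSet p e m k ↔ isPString p s ∧ (∀ j : Fin m, (j : ℕ) < k → s j = false) ∧
      (e = true → ∀ j : Fin m, m ≤ (j : ℕ) + p → s j = false) := by
  simp [pSet]

theorem pSet_zero (p : ℕ) (e : Bool) (k : ℕ) : (pSet p e 0 k).card = 1 := by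
  rw [Finset.card_eq_one]
  refine ⟨fun j => false, ?_⟩
  ext s
  simp only [mem_pSet, Finset.mem_singleton]
  constructor
  · intro _; funext j; exact absurd j.2 (by omega)
  · rintro rfl
    refine ⟨fun i j _ hi => by simp at hi, fun j h => rfl, fun _ j h => rfl⟩

theorem cons_mem_pSet_succ {p : ℕ} {e : Bool} {m k : ℕ} {b : Bool} {t : Fin m → Bool} :
    Fin.cons b t ∈ pSet p e (m + 1) (k + 1) ↔ b = false ∧ t ∈ pSet p e m k := by
  simp only [mem_pSet, cons_pstring, Fin.forall_fin_succ, Fin.cons_zero, Fin.cons_succ,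
    Fin.val_zero, Fin.val_succ]
  constructor
  · rintro ⟨⟨ht, hz⟩, ⟨hb0, hpre⟩, hend⟩
    have hb : b = false := hb0 (by omega)
    subst hb
    refine ⟨rfl, ht, fun j hj => hpre j (by omega), fun he j hj => ?_⟩
    have := (hend he).2 j (by omega)
    exact this
  · rintro ⟨rfl, ht, hpre, hend⟩
    refine ⟨⟨ht, by simp⟩, ⟨fun _ => rfl, fun j hj => hpre j (by omega)⟩, fun he => ⟨fun _ => rfl, fun j hj => hend he j (by omega)⟩⟩

theorem cons_false_mem_pSet_zero {p : ℕ} {e : Bool} {m : ℕ} {t : Fin m → Bool} :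
    Fin.cons false t ∈ pSet p e (m + 1) 0 ↔ t ∈ pSet p e m 0 := by
  simp only [mem_pSet, cons_pstring, Fin.forall_fin_succ, Fin.cons_zero, Fin.cons_succ,
    Fin.val_zero, Fin.val_succ]
  constructor
  · rintro ⟨⟨ht, _⟩, _, hend⟩
    exact ⟨ht, fun j hj => by omega, fun he j hj => (hend he).2 j (by omega)⟩
  · rintro ⟨ht, _, hend⟩
    exact ⟨⟨ht, by simp⟩, ⟨fun h => by omega, fun j hj => by omega⟩,
      fun he => ⟨fun _ => trivial, fun j hj => hend he j (by omega)⟩⟩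

theorem cons_true_mem_pSet_zero {p : ℕ} {e : Bool} {m : ℕ} {t : Fin m → Bool} :
    Fin.cons true t ∈ pSet p e (m + 1) 0 ↔ t ∈ pSet p e m p ∧ (e = true → p ≤ m) := by
  simp only [mem_pSet, cons_pstring, Fin.forall_fin_succ, Fin.cons_zero, Fin.cons_succ,
    Fin.val_zero, Fin.val_succ]
  constructor
  · rintro ⟨⟨ht, hz⟩, _, hend⟩
    refine ⟨⟨ht, fun j hj => hz trivial j hj, fun he j hj => (hend he).2 j (by omega)⟩, fun he => ?_⟩
    by_contra hc
    have := (hend he).1 (by omega)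
    simp at this
  · rintro ⟨⟨ht, hpre, hend⟩, hem⟩
    refine ⟨⟨ht, fun _ j hj => hpre j hj⟩, ⟨fun h => by omega, fun j hj => by omega⟩,
      fun he => ⟨fun h => by have := hem he; omega, fun j hj => hend he j (by omega)⟩⟩

theorem card_pSet_succ {p : ℕ} {e : Bool} {m k : ℕ} :
    (pSet p e (m + 1) (k + 1)).card = (pSet p e m k).card := by
  refine Finset.card_bij' (fun s _ => Fin.tail s) (fun t _ => Fin.cons false t) ?_ ?_ ?_ ?_
  · intro s hs
    rw [← Fin.cons_self_tail s] at hs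
    exact (cons_mem_pSet_succ.mp hs).2
  · intro t ht
    exact cons_mem_pSet_succ.mpr ⟨rfl, ht⟩
  · intro s hs
    have h0 : s 0 = false := by
      rw [← Fin.cons_self_tail s] at hs
      exact (cons_mem_pSet_succ.mp hs).1
    conv_rhs => rw [← Fin.cons_self_tail s]
    rw [h0]
  · intro t ht
    exact Fin.tail_cons _ _

theorem card_pSet_zero_succ {p : ℕ} {e : Bool} {m : ℕ} :
    (pSet p e (m + 1) 0).card =
      (pSet p e m 0).card + (if e = true ∧ m < p then 0 else (pSet p e m p).card) := by
  classical
  rw [← Finset.card_filter_add_card_filter_not (s := pSet p e (m + 1) 0)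
    (p := fun s => s 0 = false)]
  congr 1
  · refine Finset.card_bij' (fun s _ => Fin.tail s) (fun t _ => Fin.cons false t) ?_ ?_ ?_ ?_
    · intro s hs
      obtain ⟨hs, h0⟩ := Finset.mem_filter.mp hs
      apply cons_false_mem_pSet_zero.mp
      show Fin.cons false (Fin.tail s) ∈ _
      rw [← h0, Fin.cons_self_tail]; exact hs
    · intro t ht
      refine Finset.mem_filter.mpr ⟨cons_false_mem_pSet_zero.mpr ht, ?_⟩
      exact Fin.cons_zero _ _
    · intro s hs
      obtain ⟨hs, h0⟩ := Finset.mem_filter.mp hs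
      conv_rhs => rw [← Fin.cons_self_tail s]
      rw [h0]
    · intro t ht
      exact Fin.tail_cons _ _
  · by_cases hc : e = true ∧ m < p
    · rw [if_pos hc, Finset.card_eq_zero]
      ext s
      simp only [Finset.mem_filter, Finset.notMem_empty, iff_false, not_and]
      intro hs h0
      rw [Bool.not_eq_false] at h0
      rw [← Fin.cons_self_tail s, h0] at hs
      have := (cons_true_mem_pSet_zero.mp hs).2 hc.1
      omega
    · rw [if_neg hc]
      refine Finset.card_bij' (fun s _ => Fin.tail s) (fun t _ => Fin.cons true t) ?_ ?_ ?_ ?_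
      · intro s hs
        obtain ⟨hs, h0⟩ := Finset.mem_filter.mp hs
        rw [Bool.not_eq_false] at h0
        rw [← Fin.cons_self_tail s, h0] at hs
        exact (cons_true_mem_pSet_zero.mp hs).1
      · intro t ht
        refine Finset.mem_filter.mpr ⟨cons_true_mem_pSet_zero.mpr ⟨ht, fun he => le_of_not_gt (fun h => hc ⟨he, h⟩)⟩, ?_⟩
        simp
      · intro s hs
        obtain ⟨hs, h0⟩ := Finset.mem_filter.mp hs
        rw [Bool.not_eq_false] at h0
        conv_rhs => rw [← Fin.cons_self_tail s]
        rw [h0]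
      · intro t ht
        exact Fin.tail_cons _ _

theorem pSet_card (p : ℕ) (hp : 1 ≤ p) (e : Bool) :
    ∀ m k, (pSet p e m k).card = pFib p (m - k + 1 + (if e then 0 else p)) := by
  intro m
  induction m using Nat.strong_induction_on with
  | _ m ih =>
    match m with
    | 0 =>
      intro k
      rw [pSet_zero]
      cases e
      · simp only [Bool.false_eq_true, if_false]
        rw [pFib_one_of p _ hp (by omega) (by omega)]
      · simp only [if_true]
        rw [pFib_one_of p _ hp (by omega) (by omega)]
    | m + 1 =>
      intro k
      match k with
      | k + 1 =>
        rw [card_pSet_succ, ih m (by omega) k, Nat.succ_sub_succ]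
      | 0 =>
        rw [card_pSet_zero_succ, ih m (by omega) 0, ih m (by omega) p]
        cases e
        · simp only [Bool.false_eq_true, false_and, if_false]
          have h1 : pFib p (m - p + 1 + p) = pFib p (m + 1) := by
            rcases le_or_gt p m with h | h
            · congr 1; omega
            · rw [pFib_one_of p _ hp (by omega) (by omega),
                pFib_one_of p _ hp (by omega) (by omega)]
          have h2 : m - 0 + 1 + p = m + p + 1 := by omega
          have h3 : m + 1 - 0 + 1 + p = (m + p + 1) + 1 := by omega
          have hr : pFib p ((m + p + 1) + 1) = pFib p (m + p + 1) + pFib p (m + 1) := by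
            rw [pFib_succ, if_neg (by omega), show m + p + 1 - p = m + 1 from by omega]
          rw [h1, h2, h3, hr]
        · simp only [if_true, eq_self_iff_true, true_and]
          rcases le_or_gt p m with h | h
          · rw [if_neg (by omega)]
            have h1 : m + 1 - 0 + 1 + 0 = (m + 1) + 1 := by omega
            have h2 : m - 0 + 1 + 0 = m + 1 := by omega
            have h3 : m - p + 1 + 0 = m + 1 - p := by omega
            have hr : pFib p ((m + 1) + 1) = pFib p (m + 1) + pFib p (m + 1 - p) := by
              rw [pFib_succ, if_neg (by omega)]
            rw [h1, h2, h3, hr]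
          · rw [if_pos h]
            rw [pFib_one_of p _ hp (by omega) (by omega),
              pFib_one_of p _ hp (by omega) (by omega)]

def glue {n : ℕ} (i : Fin n) (u : Fin (i : ℕ) → Bool) (v : Fin (n - 1 - (i : ℕ)) → Bool) :
    Fin n → Bool :=
  fun j => if h : (j : ℕ) < (i : ℕ) then u ⟨j, h⟩
    else if h' : (j : ℕ) = (i : ℕ) then true
    else v ⟨(j : ℕ) - (i : ℕ) - 1, by have := j.isLt; have := i.isLt; omega⟩

theorem glue_lt {n : ℕ} {i : Fin n} {u v} {j : Fin n} (h : (j : ℕ) < (i : ℕ)) :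
    glue i u v j = u ⟨j, h⟩ := dif_pos h

theorem glue_eq {n : ℕ} {i : Fin n} {u v} {j : Fin n} (h : (j : ℕ) = (i : ℕ)) :
    glue i u v j = true := by
  unfold glue
  rw [dif_neg (by omega), dif_pos h]

theorem glue_gt {n : ℕ} {i : Fin n} {u v} {j : Fin n} (h : (i : ℕ) < (j : ℕ)) :
    glue i u v j = v ⟨(j : ℕ) - (i : ℕ) - 1, by have := j.isLt; omega⟩ := by
  unfold glue
  rw [dif_neg (by omega), dif_neg (by omega)]

theorem posCount (p n : ℕ) (i : Fin n) :
    (Finset.univ.filter (fun s : Fin n → Bool => isPString p s ∧ s i = true)).card =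
      (pSet p true (i : ℕ) 0).card * (pSet p false (n - 1 - (i : ℕ)) p).card := by
  rw [← Finset.card_product]
  refine Finset.card_bij'
    (fun s _ => (fun j : Fin (i : ℕ) => s ⟨j, lt_trans j.isLt i.isLt⟩,
      fun j : Fin (n - 1 - (i : ℕ)) => s ⟨(i : ℕ) + 1 + j, by have := j.isLt; have := i.isLt; omega⟩))
    (fun q _ => glue i q.1 q.2) ?_ ?_ ?_ ?_
  · intro s hs
    obtain ⟨hps, hsi⟩ := (Finset.mem_filter.mp hs).2
    refine Finset.mem_product.mpr ⟨mem_pSet.mpr ⟨?_, ?_, ?_⟩, mem_pSet.mpr ⟨?_, ?_, ?_⟩⟩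
    · intro a b hab ha hb
      exact hps ⟨a, _⟩ ⟨b, _⟩ hab ha hb
    · intro j hj; omega
    · intro _ j hj
      by_contra hc
      rw [Bool.not_eq_false] at hc
      have := hps ⟨j, _⟩ i (by simpa using j.isLt) hc hsi
      simp at this; omega
    · intro a b hab ha hb
      have := hps ⟨(i : ℕ) + 1 + a, _⟩ ⟨(i : ℕ) + 1 + b, _⟩ (by simp; omega) ha hb
      simp at this ⊢; omega
    · intro j hj
      by_contra hc
      rw [Bool.not_eq_false] at hc
      have := hps i ⟨(i : ℕ) + 1 + j, _⟩ (by simp; omega) hsi hc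
      simp at this; omega
    · intro h; simp at h
  · intro q hq
    obtain ⟨hu, hv⟩ := Finset.mem_product.mp hq
    rw [mem_pSet] at hu hv
    refine Finset.mem_filter.mpr ⟨Finset.mem_univ _, ?_, glue_eq rfl⟩
    intro a b hab ha hb
    rcases lt_trichotomy ((a : ℕ)) ((i : ℕ)) with h1 | h1 | h1 <;>
      rcases lt_trichotomy ((b : ℕ)) ((i : ℕ)) with h2 | h2 | h2
    · rw [glue_lt h1] at ha; rw [glue_lt h2] at hb
      exact hu.1 _ _ hab ha hb
    · rw [glue_lt h1] at ha
      by_contra hc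
      have := hu.2.2 rfl ⟨a, h1⟩ (by simp; omega)
      rw [ha] at this; simp at this
    · rw [glue_lt h1] at ha
      have hlt : (a : ℕ) + p < (i : ℕ) := by
        by_contra hc
        have := hu.2.2 rfl ⟨a, h1⟩ (by simp; omega)
        rw [ha] at this; simp at this
      omega
    · omega
    · omega
    · rw [glue_gt h2] at hb
      have hnp : ¬ ((b : ℕ) - (i : ℕ) - 1 < p) := by
        intro hc
        have h5 := hv.2.1 ⟨(b : ℕ) - (i : ℕ) - 1, by have := b.isLt; omega⟩ (by simpa using hc)
        have h6 := h5.symm.trans hb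
        simp at h6
      omega
    · omega
    · omega
    · rw [glue_gt h1] at ha; rw [glue_gt h2] at hb
      have := hv.1 _ _ (by simp; omega) ha hb
      simp at this; omega
  · intro s hs
    obtain ⟨hps, hsi⟩ := (Finset.mem_filter.mp hs).2
    funext j
    simp only []
    rcases lt_trichotomy ((j : ℕ)) ((i : ℕ)) with h | h | h
    · rw [glue_lt h]
    · rw [glue_eq h]
      have hj : j = i := Fin.ext h
      rw [hj, hsi]
    · rw [glue_gt h]
      exact congrArg s (Fin.ext (by simp only []; omega))
  · intro q hq
    refine Prod.ext ?_ ?_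
    · funext j
      show glue i q.1 q.2 _ = _
      rw [glue_lt (by simpa using j.isLt)]
    · funext j
      show glue i q.1 q.2 _ = _
      rw [glue_gt (by simp only []; omega)]
      exact congrArg q.2 (Fin.ext (by simp only []; omega))

theorem update_pstring {p n : ℕ} {s : Fin n → Bool} (hs : isPString p s) (i : Fin n) :
    isPString p (Function.update s i false) := by
  intro a b hab ha hb
  have ha' : s a = true := by
    rcases eq_or_ne a i with rfl | h
    · rw [Function.update_self] at ha; simp at ha
    · rwa [Function.update_of_ne h] at ha
  have hb' : s b = true := by
    rcases eq_or_ne b i with rfl | h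
    · rw [Function.update_self] at hb; simp at hb
    · rwa [Function.update_of_ne h] at hb
  exact hs a b hab ha' hb'

theorem edge_mem (p n : ℕ) (q : {q : Fin n × (Fin n → Bool) // isPString p q.2 ∧ q.2 q.1 = true}) :
    s((⟨q.1.2, q.2.1⟩ : {s : Fin n → Bool | isPString p s}),
      (⟨Function.update q.1.2 q.1.1 false, update_pstring q.2.1 q.1.1⟩ :
        {s : Fin n → Bool | isPString p s})) ∈
      ((cube n).induce {s : Fin n → Bool | isPString p s}).edgeSet := by
  rw [SimpleGraph.mem_edgeSet]
  show ∃! i, q.1.2 i ≠ Function.update q.1.2 q.1.1 false i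
  refine ⟨q.1.1, ?_, ?_⟩
  · show q.1.2 q.1.1 ≠ Function.update q.1.2 q.1.1 false q.1.1
    rw [q.2.2, Function.update_self]; simp
  · intro j hj
    by_contra hne
    rw [Function.update_of_ne hne] at hj
    exact hj rfl

theorem edge_count (p n : ℕ) :
    ePCube p n =
      Fintype.card {q : Fin n × (Fin n → Bool) // isPString p q.2 ∧ q.2 q.1 = true} := by
  rw [ePCube, ← Nat.card_eq_fintype_card]
  symm
  apply Nat.card_eq_of_bijective
    (f := fun q => (⟨_, edge_mem p n q⟩ :
      ((cube n).induce {s : Fin n → Bool | isPString p s}).edgeSet))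
  constructor
  · rintro ⟨⟨i, s⟩, hs, hsi⟩ ⟨⟨j, t⟩, ht, htj⟩ h
    have hsi' : s i = true := hsi
    have htj' : t j = true := htj
    rw [Subtype.ext_iff] at h
    simp only [] at h
    rw [Sym2.eq_iff] at h
    rcases h with ⟨h1, h2⟩ | ⟨h1, h2⟩
    · rw [Subtype.ext_iff] at h1 h2
      simp only [] at h1 h2
      subst h1
      have hij : i = j := by
        by_contra hne
        have hcf := congrFun h2 i
        rw [Function.update_self, Function.update_of_ne hne, hsi'] at hcf
        simp at hcf
      subst hij
      rfl
    · rw [Subtype.ext_iff] at h1 h2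
      simp only [] at h1 h2
      exfalso
      have hij : i ≠ j := by
        intro hij
        subst hij
        have hcf := congrFun h2 i
        rw [Function.update_self] at hcf
        rw [← hcf] at htj'
        simp at htj'
      have hsj : s j = false := by
        have hcf := congrFun h1 j
        rw [Function.update_self] at hcf
        exact hcf
      have hts : t j = s j := by
        have hcf := congrFun h2 j
        rw [Function.update_of_ne (Ne.symm hij)] at hcf
        exact hcf.symm
      rw [htj', hsj] at hts
      simp at hts
  · rintro ⟨e, he⟩
    revert he
    induction e using Sym2.ind with
    | _ x y =>
      intro he
      have hadj : ∃! k, (x : Fin n → Bool) k ≠ (y : Fin n → Bool) k := by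
        rw [SimpleGraph.mem_edgeSet] at he
        exact he
      obtain ⟨k, hk, hu⟩ := hadj
      have heq : ∀ j, j ≠ k → (x : Fin n → Bool) j = (y : Fin n → Bool) j := by
        intro j hj
        by_contra hc
        exact hj (hu j hc)
      cases hxk : (x : Fin n → Bool) k with
      | true =>
        have hyk : (y : Fin n → Bool) k = false := by
          revert hk
          cases hy : (y : Fin n → Bool) k
          · intro _; rfl
          · intro hk; exact absurd hxk hk
        refine ⟨⟨(k, (x : Fin n → Bool)), x.2, hxk⟩, ?_⟩
        apply Subtype.ext
        simp only []
        rw [Sym2.eq_iff]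
        left
        refine ⟨Subtype.ext rfl, Subtype.ext ?_⟩
        simp only []
        funext j
        rcases eq_or_ne j k with rfl | hj
        · rw [Function.update_self, hyk]
        · rw [Function.update_of_ne hj, heq j hj]
      | false =>
        have hyk : (y : Fin n → Bool) k = true := by
          revert hk
          cases hy : (y : Fin n → Bool) k
          · intro hk; exact absurd hxk hk
          · intro _; rfl
        refine ⟨⟨(k, (y : Fin n → Bool)), y.2, hyk⟩, ?_⟩
        apply Subtype.ext
        simp only []
        rw [Sym2.eq_iff]
        right
        refine ⟨Subtype.ext rfl, Subtype.ext ?_⟩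
        simp only []
        funext j
        rcases eq_or_ne j k with rfl | hj
        · rw [Function.update_self, hxk]
        · rw [Function.update_of_ne hj, (heq j hj).symm]

/-- Theorem 4.2: for `p ≥ 1` and `n ≥ 1`,
`|E(Γ^p_n)| = ∑_{i=1}^{n} F^p_i · F^p_{n-i+1}`. -/
theorem ePCube_convolution (p n : ℕ) (hp : 1 ≤ p) (hn : 1 ≤ n) :
    ePCube p n = ∑ i ∈ Finset.Icc 1 n, pFib p i * pFib p (n - i + 1) := by
  classical
  rw [edge_count p n]
  rw [Fintype.card_congr (Equiv.subtypeProdEquivSigmaSubtype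
    (fun (i : Fin n) (s : Fin n → Bool) => isPString p s ∧ s i = true))]
  rw [Fintype.card_sigma]
  have hterm : ∀ i : Fin n,
      Fintype.card {s : Fin n → Bool // isPString p s ∧ s i = true} =
        pFib p ((i : ℕ) + 1) * pFib p (n - (i : ℕ)) := by
    intro i
    rw [Fintype.card_subtype, posCount, pSet_card p hp true, pSet_card p hp false]
    have h1 : (i : ℕ) - 0 + 1 + (if true then 0 else p) = (i : ℕ) + 1 := by simp
    rw [h1]
    congr 1
    simp only [if_neg (by simp : ¬ (false : Bool) = true)]
    have hi := i.isLt
    rcases le_or_gt p (n - 1 - (i : ℕ)) with h | h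
    · congr 1; omega
    · rw [pFib_one_of p _ hp (by omega) (by omega),
        pFib_one_of p _ hp (by omega) (by omega)]
  rw [Finset.sum_congr rfl (fun i _ => hterm i)]
  rw [Fin.sum_univ_eq_sum_range (fun i => pFib p (i + 1) * pFib p (n - i))]
  have hicc : Finset.Icc 1 n = Finset.Ico 1 (n + 1) := by
    rw [Finset.Ico_add_one_right_eq_Icc]
  rw [hicc, Finset.sum_Ico_eq_sum_range]
  have hnn : n + 1 - 1 = n := by omega
  rw [hnn]
  apply Finset.sum_congr rfl
  intro i hi
  rw [Finset.mem_range] at hi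
  congr 1
  · congr 1; omega
  · congr 1; omega
end
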